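/- arXiv:1711.10303 — 7 statements merged into one kernel-verified Lean document; each statement's English description precedes it below -/
import Mathlib

section
/- Let Ξ be a nonempty subset of L^0(X;F), the space of F-measurable random elements of a separable Banach space X with the topology of convergence in probability. If Ξ is F-decomposable (i.e., 1_A ξ + 1_{A^c} η ∈ Ξ for all ξ,η ∈ Ξ and A ∈ F) and closed in probability, then there exists a random closed set Y (a graph-measurable set-valued map with closed values) such that Ξ equals the set of all measurable selections of Y. -/
open scoped Classical

open MeasureTheory

open Set Filter Function Topology TopologicalSpace

/-!
Every family `Ξ` of measurable random elements of a second countable space has a countable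
subfamily `{ξₙ}` that is essentially dense in it: for each basic open set `o`, the events
`{ξ ∈ o}`, `ξ ∈ Ξ`, are a.s. covered by countably many of them (take a countable family
maximising the measure of the union). Each `ξ ∈ Ξ` is then a selection of the random closed set
`Y ω = closure {ξₙ ω}`. Conversely, a measurable selection `ξ` of `Y` is, up to `1/(m+1)`, the
countable gluing of the `ξₙ` along the events `{dist ξ ξₙ < 1/(m+1)}`; decomposability and
closedness in probability make `Ξ` stable under countable gluing, so these approximations lie
in `Ξ`, and hence so does their limit `ξ`.
-/

namespace MeasureTheory

theorem exists_countable_subset_ae_le_biUnion {Ω ι : Type*} [MeasurableSpace Ω]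
    (μ : Measure Ω) [IsFiniteMeasure μ] (s : Set ι) (A : ι → Set Ω)
    (hA : ∀ i ∈ s, MeasurableSet (A i)) :
    ∃ J ⊆ s, J.Countable ∧ ∀ i ∈ s, A i ≤ᵐ[μ] ⋃ j ∈ J, A j := by
  let 𝒥 : Set (Set ι) := {J | J ⊆ s ∧ J.Countable}
  let m : Set ι → ENNReal := fun J => μ (⋃ j ∈ J, A j)
  have hempty : ∅ ∈ 𝒥 := ⟨empty_subset s, countable_empty⟩
  obtain ⟨u, -, hu, hu𝒥⟩ :=
    exists_seq_tendsto_sSup (Nonempty.image m ⟨∅, hempty⟩) (OrderTop.bddAbove _)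
  choose J hJ hmJ using hu𝒥
  let J' := ⋃ n, J n
  have hJ' : J' ∈ 𝒥 := ⟨iUnion_subset fun n => (hJ n).1, countable_iUnion fun n => (hJ n).2⟩
  -- `J'` maximises `m` on `𝒥`, so adding any `A i` to its union adds only a null set.
  have hmax : ∀ K ∈ 𝒥, m K ≤ m J' := by
    refine fun K hK => (le_sSup (mem_image_of_mem m hK)).trans (le_of_tendsto' hu fun n => ?_)
    rw [← hmJ n]
    exact measure_mono (biUnion_subset_biUnion_left (subset_iUnion J n))
  refine ⟨J', hJ'.1, hJ'.2, fun i hi => ?_⟩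
  have hmeas : MeasurableSet (⋃ j ∈ J', A j) := .biUnion hJ'.2 fun j hj => hA j (hJ'.1 hj)
  have hle : μ (A i ∪ ⋃ j ∈ J', A j) ≤ μ (⋃ j ∈ J', A j) := by
    simpa only [m, biUnion_insert] using hmax _ ⟨insert_subset hi hJ'.1, hJ'.2.insert i⟩
  rw [ae_le_set, measure_sdiff' _ hmeas.nullMeasurableSet (measure_ne_top _ _)]
  exact tsub_eq_zero_of_le hle

section Castaing

variable {Ω X : Type*} [MeasurableSpace Ω] [TopologicalSpace X] [SecondCountableTopology X]
  [MeasurableSpace X] [OpensMeasurableSpace X]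

theorem exists_seq_ae_mem_closure_range (μ : Measure Ω) [IsFiniteMeasure μ]
    {Ξ : Set (Ω → X)} (hne : Ξ.Nonempty) (hmeas : ∀ ξ ∈ Ξ, Measurable ξ) :
    ∃ ξs : ℕ → Ω → X, (∀ n, ξs n ∈ Ξ) ∧
      ∀ ξ ∈ Ξ, ∀ᵐ ω ∂μ, ξ ω ∈ closure (range fun n => ξs n ω) := by
  let B := countableBasis X
  have hB := isBasis_countableBasis X
  choose! J hJΞ hJc hJ using fun o (ho : o ∈ B) =>
    exists_countable_subset_ae_le_biUnion μ Ξ (fun ξ => ξ ⁻¹' o)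
      fun ξ hξ => hmeas ξ hξ (hB.isOpen ho).measurableSet
  obtain ⟨ξ₀, hξ₀⟩ := hne
  obtain ⟨ξs, hξs⟩ : ∃ ξs : ℕ → Ω → X, insert ξ₀ (⋃ o ∈ B, J o) = range ξs :=
    ((countable_countableBasis X).biUnion hJc).insert ξ₀ |>.exists_eq_range (insert_nonempty _ _)
  refine ⟨ξs, fun n => ?_, fun ξ hξ => ?_⟩
  · have hn : ξs n ∈ insert ξ₀ (⋃ o ∈ B, J o) := hξs ▸ mem_range_self n
    simp only [mem_insert_iff, mem_iUnion] at hn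
    obtain rfl | ⟨o, ho, hn⟩ := hn
    exacts [hξ₀, hJΞ o ho hn]
  filter_upwards [(ae_ball_iff (countable_countableBasis X)).2 fun o ho => hJ o ho ξ hξ]
    with ω hω
  refine hB.mem_closure_iff.2 fun o ho hξo => ?_
  obtain ⟨η, hηJ, hηo⟩ := mem_iUnion₂.1 (hω o ho hξo)
  obtain ⟨n, rfl⟩ : η ∈ range ξs := hξs ▸ mem_insert_of_mem _ (mem_biUnion ho hηJ)
  exact ⟨_, hηo, n, rfl⟩

theorem measurableSet_setOf_mem_closure_range {ξs : ℕ → Ω → X} (hξs : ∀ n, Measurable (ξs n)) :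
    MeasurableSet {p : Ω × X | p.2 ∈ closure (range fun n => ξs n p.1)} := by
  have hB := isBasis_countableBasis X
  have : {p : Ω × X | p.2 ∈ closure (range fun n => ξs n p.1)} =
      ⋂ o ∈ countableBasis X, {p | p.2 ∈ o}ᶜ ∪ ⋃ n, {p | ξs n p.1 ∈ o} := by
    ext p
    simp only [hB.mem_closure_iff, mem_ofPred_eq, mem_iInter, mem_union, mem_compl_iff,
      mem_iUnion, imp_iff_not_or, inter_nonempty, mem_range]
    grind
  rw [this]
  refine .biInter (countable_countableBasis X) fun o ho => .union ?_ (.iUnion fun n => ?_)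
  · exact (measurable_snd (hB.isOpen ho).measurableSet).compl
  · exact (hξs n).comp measurable_fst (hB.isOpen ho).measurableSet

end Castaing

def IsDecomposable {Ω X : Type*} [MeasurableSpace Ω] (Ξ : Set (Ω → X)) : Prop :=
  ∀ ξ ∈ Ξ, ∀ η ∈ Ξ, ∀ A : Set Ω, MeasurableSet A → (fun ω => if ω ∈ A then ξ ω else η ω) ∈ Ξ

def IsSeqClosedInMeasure {Ω X : Type*} [MeasurableSpace Ω] [MeasurableSpace X] [EDist X]
    (μ : Measure Ω) (Ξ : Set (Ω → X)) : Prop :=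
  ∀ γ : Ω → X, Measurable γ →
    (∃ f : ℕ → Ω → X, (∀ n, f n ∈ Ξ) ∧ TendstoInMeasure μ f atTop γ) → γ ∈ Ξ

noncomputable def piecewiseSeq {Ω X : Type*} (ξ₀ : Ω → X) (ξ : ℕ → Ω → X) (C : ℕ → Set Ω) :
    ℕ → Ω → X
  | 0 => ξ₀
  | N + 1 => fun ω => if ω ∈ C N then ξ N ω else piecewiseSeq ξ₀ ξ C N ω

section Piecewise

variable {Ω X : Type*} {ξ₀ : Ω → X} {ξ : ℕ → Ω → X} {C : ℕ → Set Ω} {ω : Ω}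

theorem piecewiseSeq_eq_of_mem (hC : Pairwise (Disjoint on C)) {k N : ℕ} (hω : ω ∈ C k)
    (hkN : k < N) : piecewiseSeq ξ₀ ξ C N ω = ξ k ω := by
  induction N, hkN using Nat.le_induction with
  | base => simp [piecewiseSeq, hω]
  | succ N hkN ih =>
    have hωN : ω ∉ C N := fun h => disjoint_left.1 (hC (Nat.ne_of_lt hkN)) hω h
    simp [piecewiseSeq, hωN, ih]

theorem piecewiseSeq_eq_of_forall_notMem (hω : ∀ k, ω ∉ C k) (N : ℕ) :
    piecewiseSeq ξ₀ ξ C N ω = ξ₀ ω := by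
  induction N with
  | zero => rfl
  | succ N ih => simp [piecewiseSeq, hω N, ih]

theorem IsDecomposable.piecewiseSeq_mem [MeasurableSpace Ω] {Ξ : Set (Ω → X)}
    (hdec : IsDecomposable Ξ) (hξ₀ : ξ₀ ∈ Ξ) (hξ : ∀ k, ξ k ∈ Ξ) (hC : ∀ k, MeasurableSet (C k))
    (N : ℕ) : piecewiseSeq ξ₀ ξ C N ∈ Ξ := by
  induction N with
  | zero => exact hξ₀
  | succ N ih => exact hdec _ (hξ N) _ ih _ (hC N)

end Piecewise

section Decomposable

variable {Ω X : Type*} [MeasurableSpace Ω] [PseudoMetricSpace X] [SecondCountableTopology X]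
  [MeasurableSpace X] [BorelSpace X] {μ : Measure Ω} [IsFiniteMeasure μ] {Ξ : Set (Ω → X)}

theorem IsSeqClosedInMeasure.mem_of_ae_tendsto (hclosed : IsSeqClosedInMeasure μ Ξ)
    (hmeas : ∀ ξ ∈ Ξ, Measurable ξ) {f : ℕ → Ω → X} (hf : ∀ n, f n ∈ Ξ) {g : Ω → X}
    (hg : Measurable g) (hlim : ∀ᵐ ω ∂μ, Tendsto (fun n => f n ω) atTop (𝓝 (g ω))) : g ∈ Ξ :=
  hclosed g hg
    ⟨f, hf, tendstoInMeasure_of_tendsto_ae (fun n => (hmeas _ (hf n)).aestronglyMeasurable) hlim⟩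

theorem IsDecomposable.exists_mem_eqOn_of_pairwise_disjoint (hdec : IsDecomposable Ξ)
    (hclosed : IsSeqClosedInMeasure μ Ξ) (hmeas : ∀ ξ ∈ Ξ, Measurable ξ) {ξ₀ : Ω → X}
    (hξ₀ : ξ₀ ∈ Ξ) {ξ : ℕ → Ω → X} (hξ : ∀ k, ξ k ∈ Ξ) {C : ℕ → Set Ω}
    (hCm : ∀ k, MeasurableSet (C k)) (hCd : Pairwise (Disjoint on C)) :
    ∃ η ∈ Ξ, ∀ k, EqOn η (ξ k) (C k) := by
  have hmem := hdec.piecewiseSeq_mem hξ₀ hξ hCm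
  let η : Ω → X := fun ω => if h : ∃ k, ω ∈ C k then ξ h.choose ω else ξ₀ ω
  have hη : ∀ k, EqOn η (ξ k) (C k) := by
    intro k ω hω
    have h : ∃ k, ω ∈ C k := ⟨k, hω⟩
    have hk : h.choose = k := hCd.eq (not_disjoint_iff.2 ⟨ω, h.choose_spec, hω⟩)
    simp only [η, dif_pos h, hk]
  have hlim : ∀ ω, Tendsto (fun N => piecewiseSeq ξ₀ ξ C N ω) atTop (𝓝 (η ω)) := by
    intro ω
    by_cases h : ∃ k, ω ∈ C k
    · obtain ⟨k, hk⟩ := h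
      refine tendsto_atTop_of_eventually_const (i₀ := k + 1) fun N hN => ?_
      rw [hη k hk, piecewiseSeq_eq_of_mem hCd hk hN]
    · refine tendsto_atTop_of_eventually_const (i₀ := 0) fun N _ => ?_
      simp only [η, dif_neg h, piecewiseSeq_eq_of_forall_notMem (not_exists.1 h)]
  have hηm : Measurable η :=
    measurable_of_tendsto_metrizable (fun N => hmeas _ (hmem N)) (tendsto_pi_nhds.2 hlim)
  exact ⟨η, hclosed.mem_of_ae_tendsto hmeas hmem hηm (ae_of_all _ hlim), hη⟩

theorem IsDecomposable.mem_of_ae_mem_closure_range (hdec : IsDecomposable Ξ)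
    (hclosed : IsSeqClosedInMeasure μ Ξ) (hmeas : ∀ ξ ∈ Ξ, Measurable ξ) (hne : Ξ.Nonempty)
    {ξs : ℕ → Ω → X} (hξs : ∀ n, ξs n ∈ Ξ) {ξ : Ω → X} (hξ : Measurable ξ)
    (hsel : ∀ᵐ ω ∂μ, ξ ω ∈ closure (range fun n => ξs n ω)) : ξ ∈ Ξ := by
  obtain ⟨ξ₀, hξ₀⟩ := hne
  -- `η m` takes at `ω` the value of some `ξs n` that is `1/(m+1)`-close to `ξ ω`, if any.
  let A : ℕ → ℕ → Set Ω := fun m n => {ω | dist (ξ ω) (ξs n ω) < 1 / (m + 1)}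
  have hA : ∀ m n, MeasurableSet (A m n) := fun m n =>
    measurableSet_lt (hξ.dist (hmeas _ (hξs n))) measurable_const
  choose η hηΞ hη using fun m => hdec.exists_mem_eqOn_of_pairwise_disjoint hclosed hmeas hξ₀ hξs
    (MeasurableSet.disjointed (hA m)) (disjoint_disjointed (A m))
  refine hclosed.mem_of_ae_tendsto hmeas hηΞ hξ ?_
  filter_upwards [hsel] with ω hω
  have hclose : ∀ m : ℕ, dist (η m ω) (ξ ω) ≤ 1 / (m + 1) := by
    intro m
    obtain ⟨n, hn⟩ := Metric.mem_closure_range_iff.1 hω _ Nat.one_div_pos_of_nat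
    obtain ⟨k, hk⟩ : ∃ k, ω ∈ disjointed (A m) k := by
      rw [← mem_iUnion, iUnion_disjointed]
      exact mem_iUnion_of_mem n hn
    rw [hη m k hk, dist_comm]
    exact (disjointed_subset _ _ hk).le
  exact tendsto_iff_dist_tendsto_zero.2
    (squeeze_zero (fun _ => dist_nonneg) hclose tendsto_one_div_add_atTop_nhds_zero_nat)

end Decomposable

end MeasureTheory

theorem stmt1_general {Ω X : Type*} [MeasurableSpace Ω] [NormedAddCommGroup X]
    [TopologicalSpace.SeparableSpace X] [MeasurableSpace X] [BorelSpace X]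
    (P : Measure Ω) [IsProbabilityMeasure P]
    (Ξ : Set (Ω → X)) (hne : Ξ.Nonempty)
    (hmeas : ∀ ξ ∈ Ξ, Measurable ξ)
    (hdec : ∀ ξ ∈ Ξ, ∀ η ∈ Ξ, ∀ A : Set Ω, MeasurableSet A → (fun ω => if ω ∈ A then ξ ω else η ω) ∈ Ξ)
    (hclosed : ∀ γ : Ω → X, Measurable γ →
      (∃ f : ℕ → Ω → X, (∀ n, f n ∈ Ξ) ∧ TendstoInMeasure P f Filter.atTop γ) → γ ∈ Ξ) :
    ∃ Y : Ω → Set X, (∀ ω, IsClosed (Y ω)) ∧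
      MeasurableSet {p : Ω × X | p.2 ∈ Y p.1} ∧
      Ξ = {ξ : Ω → X | Measurable ξ ∧ ∀ᵐ ω ∂P, ξ ω ∈ Y ω} := by
  have := UniformSpace.secondCountable_of_separable X
  obtain ⟨ξs, hξsΞ, hsel⟩ := exists_seq_ae_mem_closure_range P hne hmeas
  refine ⟨fun ω => closure (Set.range fun n => ξs n ω), fun _ => isClosed_closure,
    measurableSet_setOf_mem_closure_range fun n => hmeas _ (hξsΞ n), ?_⟩
  ext ξ
  exact ⟨fun hξ => ⟨hmeas ξ hξ, hsel ξ hξ⟩, fun ⟨hξ, hξY⟩ =>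
    IsDecomposable.mem_of_ae_mem_closure_range hdec hclosed hmeas hne hξsΞ hξ hξY⟩

/-- Theorem 2.4 (p = 0 case): a nonempty, F-decomposable, probability-closed family of
measurable random elements is the family of measurable selections of a random closed set. -/
theorem stmt1 {Ω X : Type*} [MeasurableSpace Ω] [NormedAddCommGroup X] [NormedSpace ℝ X]
    [CompleteSpace X] [TopologicalSpace.SeparableSpace X] [MeasurableSpace X] [BorelSpace X]
    (P : Measure Ω) [IsProbabilityMeasure P] (hPc : P.IsComplete)
    (Ξ : Set (Ω → X)) (hne : Ξ.Nonempty)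
    (hmeas : ∀ ξ ∈ Ξ, Measurable ξ)
    (hdec : ∀ ξ ∈ Ξ, ∀ η ∈ Ξ, ∀ A : Set Ω, MeasurableSet A → (fun ω => if ω ∈ A then ξ ω else η ω) ∈ Ξ)
    (hclosed : ∀ γ : Ω → X, Measurable γ →
      (∃ f : ℕ → Ω → X, (∀ n, f n ∈ Ξ) ∧ TendstoInMeasure P f Filter.atTop γ) → γ ∈ Ξ) :
    ∃ Y : Ω → Set X, (∀ ω, IsClosed (Y ω)) ∧
      MeasurableSet {p : Ω × X | p.2 ∈ Y p.1} ∧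
      Ξ = {ξ : Ω → X | Measurable ξ ∧ ∀ᵐ ω ∂P, ξ ω ∈ Y ω} :=
  stmt1_general P Ξ hne hmeas hdec hclosed
end

section
/- Let Ξ ⊆ L^0(X;F) be F-decomposable and closed in probability, and suppose Ξ = L^0(Y;F) is the set of selections of a random closed set Y. Then Ξ is convex if and only if Y(ω) is convex for almost all ω, and Ξ is a cone (closed under multiplication by nonnegative scalars) if and only if Y(ω) is a cone for almost all ω. -/
/-!
Since `Ξ = L⁰(Y)`, one implication of each equivalence is pointwise. For the other one, the
Kuratowski–Ryll-Nardzewski selection theorem gives a Castaing representation: countably many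
`cᵢ ∈ Ξ` with `Y ω ⊆ closure {cᵢ ω | i}` for every `ω`. Convexity (the cone property) of `Ξ`,
applied to the countably many rational combinations of the `cᵢ`, holds outside one null set, and
closedness of `Y ω` extends it to all of `Y ω`.

The selection theorem needs `{ω | G ω ∩ U ≠ ∅}` to be measurable whenever the graph of `G` is.
This holds because `P` is complete: after mapping `Ω` to a Cantor space through countably many
measurable sets, such a set is the preimage of an analytic set, and analytic sets are universally
measurable by Lusin's inner approximation through closed subsets of images of `ℕ → ℕ`.
-/

open scoped Classical ENNReal
open MeasureTheory Set Filter Topology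

section InnerApproximation

variable {α : Type*} [MeasurableSpace α]

theorem exists_measure_iUnion_le_add {μ : Measure α} [IsFiniteMeasure μ] {s : ℕ → Set α}
    (hs : Monotone s) {δ : ℝ≥0∞} (hδ : δ ≠ 0) : ∃ n, μ (⋃ n, s n) ≤ μ (s n) + δ := by
  have : μ (⋃ n, s n) < ⨆ n, (μ (s n) + δ) := by
    rw [← ENNReal.iSup_add, ← hs.measure_iUnion]
    exact ENNReal.lt_add_right (measure_ne_top _ _) hδ
  obtain ⟨n, hn⟩ := lt_iSup_iff.1 this
  exact ⟨n, hn.le⟩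

theorem nullMeasurableSet_of_forall_exists_measurableSet_subset {μ : Measure α}
    [IsFiniteMeasure μ] {s : Set α}
    (hs : ∀ ε ≠ 0, ∃ t ⊆ s, MeasurableSet t ∧ μ s ≤ μ t + ε) : NullMeasurableSet s μ := by
  choose t hts ht hμt using fun n : ℕ =>
    hs (n : ℝ≥0∞)⁻¹ (ENNReal.inv_ne_zero.2 (ENNReal.natCast_ne_top n))
  have hU : MeasurableSet (⋃ n, t n) := .iUnion ht
  refine hU.nullMeasurableSet.congr
    (ae_eq_of_subset_of_measure_ge (iUnion_subset hts) ?_ hU.nullMeasurableSet (measure_ne_top _ _))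
  refine ENNReal.le_of_forall_pos_le_add fun ε hε _ => ?_
  obtain ⟨n, hn⟩ := ENNReal.exists_inv_nat_lt (ENNReal.coe_ne_zero.2 hε.ne')
  calc μ s ≤ μ (t n) + (n : ℝ≥0∞)⁻¹ := hμt n
    _ ≤ μ (⋃ n, t n) + ε := add_le_add (measure_mono (subset_iUnion t n)) hn.le

end InnerApproximation

section AnalyticSet

variable {α : Type*}

theorem iInter_closure_image_subset_image_pi [MetricSpace α] {f : (ℕ → ℕ) → α}
    (hf : Continuous f) (g : ℕ → ℕ) :
    ⋂ k, closure (f '' {x | ∀ i < k, x i ≤ g i}) ⊆ f '' univ.pi fun i => Iic (g i) := by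
  intro y hy
  have hx : ∀ k : ℕ, ∃ x : ℕ → ℕ, (∀ i < k, x i ≤ g i) ∧ dist (f x) y < 1 / (k + 1) := by
    intro k
    obtain ⟨_, ⟨x, hx, rfl⟩, hxy⟩ :=
      Metric.mem_closure_iff.1 (mem_iInter.1 hy k) _ Nat.one_div_pos_of_nat
    exact ⟨x, hx, by rwa [dist_comm]⟩
  choose x hxg hxy using hx
  -- Truncating `x k` at `g` changes none of its first `k` coordinates.
  obtain ⟨z, hz, φ, hφ, hτx⟩ :=
    (isCompact_univ_pi fun i => (finite_Iic (g i)).isCompact).tendsto_subseq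
      (x := fun k i => min (x k i) (g i)) fun k i _ => mem_Iic.2 (min_le_right _ _)
  have hxz : Tendsto (x ∘ φ) atTop (𝓝 z) := by
    refine tendsto_pi_nhds.2 fun i => (tendsto_pi_nhds.1 hτx i).congr' ?_
    filter_upwards [hφ.tendsto_atTop.eventually_gt_atTop i] with k hk
    exact min_eq_left (hxg _ i hk)
  have hfxy : Tendsto (fun k => f (x k)) atTop (𝓝 y) :=
    tendsto_iff_dist_tendsto_zero.2 <| squeeze_zero (fun _ => dist_nonneg) (fun k => (hxy k).le)
      tendsto_one_div_add_atTop_nhds_zero_nat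
  exact ⟨z, hz, tendsto_nhds_unique ((hf.tendsto z).comp hxz) (hfxy.comp hφ.tendsto_atTop)⟩

variable [MeasurableSpace α]

theorem exists_measure_image_le_image_inter (μ : Measure α) [IsFiniteMeasure μ]
    (f : (ℕ → ℕ) → α) (S : Set (ℕ → ℕ)) (k : ℕ) {δ : ℝ≥0∞} (hδ : δ ≠ 0) :
    ∃ m, μ (f '' S) ≤ μ (f '' (S ∩ {x | x k ≤ m})) + δ := by
  have hS : f '' S = ⋃ m, f '' (S ∩ {x | x k ≤ m}) := by
    rw [← image_iUnion, ← inter_iUnion,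
      iUnion_eq_univ_iff.2 fun x => ⟨x k, (le_rfl : x k ≤ x k)⟩, inter_univ]
  rw [hS]
  exact exists_measure_iUnion_le_add (s := fun m => f '' (S ∩ {x | x k ≤ m}))
    (fun m m' h => image_mono (inter_subset_inter_right _ fun x hx => le_trans hx h)) hδ

theorem exists_forall_measure_range_le_image (μ : Measure α) [IsFiniteMeasure μ]
    (f : (ℕ → ℕ) → α) {ε : ℝ≥0∞} (hε : ε ≠ 0) :
    ∃ g : ℕ → ℕ, ∀ k, μ (range f) ≤ μ (f '' {x | ∀ i < k, x i ≤ g i}) + ε := by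
  obtain ⟨δ, hδ, hδε⟩ := ENNReal.exists_pos_sum_of_countable hε ℕ
  choose m hm using fun S k =>
    exists_measure_image_le_image_inter μ f S k (ENNReal.coe_ne_zero.2 (hδ k).ne')
  let S : ℕ → Set (ℕ → ℕ) := fun k => Nat.rec univ (fun k Sk => Sk ∩ {x | x k ≤ m Sk k}) k
  have hS : ∀ k, S k = {x | ∀ i < k, x i ≤ m (S i) i} := by
    intro k
    induction k with
    | zero => simp [S]
    | succ k ih =>
      ext x
      change x ∈ S k ∩ {x | x k ≤ m (S k) k} ↔ ∀ i < k + 1, x i ≤ m (S i) i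
      nth_rw 1 [ih]
      simp only [mem_inter_iff, mem_ofPred_eq, Nat.lt_succ_iff_lt_or_eq, or_imp, forall_and,
        forall_eq]
  have hμS : ∀ k, μ (range f) ≤ μ (f '' S k) + ∑ i ∈ Finset.range k, (δ i : ℝ≥0∞) := by
    intro k
    induction k with
    | zero => simp [S]
    | succ k ih =>
      calc μ (range f) ≤ μ (f '' S k) + ∑ i ∈ Finset.range k, (δ i : ℝ≥0∞) := ih
        _ ≤ μ (f '' S (k + 1)) + δ k + ∑ i ∈ Finset.range k, (δ i : ℝ≥0∞) := by
          gcongr; exact hm (S k) k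
        _ = _ := by rw [Finset.sum_range_succ]; ring
  refine ⟨fun i => m (S i) i, fun k => ?_⟩
  calc μ (range f) ≤ μ (f '' S k) + ∑ i ∈ Finset.range k, (δ i : ℝ≥0∞) := hμS k
    _ ≤ μ (f '' S k) + ε := by
      gcongr
      exact (ENNReal.sum_le_tsum _).trans hδε.le
    _ = _ := by rw [hS k]

theorem exists_isClosed_subset_range_measure_le [MetricSpace α] [OpensMeasurableSpace α]
    (μ : Measure α) [IsFiniteMeasure μ] {f : (ℕ → ℕ) → α} (hf : Continuous f) {ε : ℝ≥0∞}
    (hε : ε ≠ 0) : ∃ C, IsClosed C ∧ C ⊆ range f ∧ μ (range f) ≤ μ C + ε := by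
  obtain ⟨g, hg⟩ := exists_forall_measure_range_le_image μ f hε
  let K : ℕ → Set α := fun k => closure (f '' {x | ∀ i < k, x i ≤ g i})
  have hK : Antitone K := fun k l hkl =>
    closure_mono (image_mono fun x hx i hi => hx i (hi.trans_le hkl))
  refine ⟨⋂ k, K k, isClosed_iInter fun _ => isClosed_closure,
    (iInter_closure_image_subset_image_pi hf g).trans (image_subset_range _ _), ?_⟩
  rw [hK.measure_iInter (fun _ => isClosed_closure.nullMeasurableSet) ⟨0, measure_ne_top _ _⟩,
    ENNReal.iInf_add]
  exact le_iInf fun k => (hg k).trans (add_le_add_left (measure_mono subset_closure) _)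

theorem MeasureTheory.AnalyticSet.nullMeasurableSet [TopologicalSpace α]
    [TopologicalSpace.MetrizableSpace α] [OpensMeasurableSpace α] {s : Set α}
    (hs : AnalyticSet s) (μ : Measure α) [IsFiniteMeasure μ] : NullMeasurableSet s μ := by
  let := TopologicalSpace.metrizableSpaceMetric α
  rw [AnalyticSet] at hs
  rcases hs with rfl | ⟨f, hf, rfl⟩
  · exact nullMeasurableSet_empty
  refine nullMeasurableSet_of_forall_exists_measurableSet_subset fun ε hε => ?_
  obtain ⟨C, hC, hCf, hμC⟩ := exists_isClosed_subset_range_measure_le μ hf hε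
  exact ⟨C, hCf, hC.measurableSet, hμC⟩

end AnalyticSet

section Projection

variable {Ω X : Type*} [MeasurableSpace Ω] [mX : MeasurableSpace X]

theorem MeasurableSet.exists_countable_measurableSet_generateFrom_prod {M : Set (Ω × X)}
    (hM : MeasurableSet M) :
    ∃ C : Set (Set Ω), C.Countable ∧ (∀ s ∈ C, MeasurableSet s) ∧
      MeasurableSet[(MeasurableSpace.generateFrom C).prod mX] M := by
  rw [← generateFrom_prod] at hM
  induction M, hM using MeasurableSpace.generateFrom_induction with
  | hC _ hR =>
    obtain ⟨s, hs, t, ht, rfl⟩ := hR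
    exact ⟨{s}, countable_singleton s, by simpa using hs,
      @MeasurableSet.prod _ _ (MeasurableSpace.generateFrom {s}) _ _ _
        (MeasurableSpace.measurableSet_generateFrom rfl) ht⟩
  | empty => exact ⟨∅, countable_empty, by simp, MeasurableSpace.measurableSet_empty _⟩
  | compl _ _ ih =>
    obtain ⟨C, hC, hCm, hM⟩ := ih
    exact ⟨C, hC, hCm, hM.compl⟩
  | iUnion M _ ih =>
    choose C hC hCm hM using ih
    refine ⟨⋃ n, C n, countable_iUnion hC, fun s hs => ?_, .iUnion fun n => ?_⟩
    · obtain ⟨n, hn⟩ := mem_iUnion.1 hs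
      exact hCm n s hn
    · exact sup_le_sup_right (MeasurableSpace.comap_mono
        (MeasurableSpace.generateFrom_mono (subset_iUnion C n))) _ _ (hM n)

theorem MeasurableSet.exists_measurableSet_preimage_prodMap {M : Set (Ω × X)}
    (hM : MeasurableSet M) :
    ∃ C : Set (Set Ω), C.Countable ∧ ∃ φ : Ω → C → Bool, Measurable φ ∧
      ∃ M' : Set ((C → Bool) × X), MeasurableSet M' ∧ M = Prod.map φ id ⁻¹' M' := by
  obtain ⟨C, hC, hCm, hM⟩ := hM.exists_countable_measurableSet_generateFrom_prod
  let φ : Ω → C → Bool := fun ω s => decide (ω ∈ s.1)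
  have hφ : Measurable φ :=
    measurable_pi_iff.2 fun s => measurable_to_bool (by simpa [φ, preimage] using hCm s s.2)
  have hle : MeasurableSpace.generateFrom C ≤ MeasurableSpace.comap φ MeasurableSpace.pi := by
    refine MeasurableSpace.generateFrom_le fun s hs => ⟨{y | y ⟨s, hs⟩ = true}, ?_, ?_⟩
    · exact measurableSet_eq_fun (measurable_pi_apply _) measurable_const
    · ext ω; simp [φ]
  have hM' :
      MeasurableSet[MeasurableSpace.comap (Prod.map φ id) (MeasurableSpace.pi.prod mX)] M := by
    rw [MeasurableSpace.comap_prodMap, MeasurableSpace.comap_id]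
    exact sup_le_sup_right (MeasurableSpace.comap_mono hle) _ _ hM
  obtain ⟨M', hM', rfl⟩ := hM'
  exact ⟨C, hC, φ, hφ, M', hM', rfl⟩

variable [TopologicalSpace X] [PolishSpace X] [BorelSpace X]

theorem MeasurableSet.image_fst (P : Measure Ω) [IsFiniteMeasure P] [P.IsComplete]
    {M : Set (Ω × X)} (hM : MeasurableSet M) : MeasurableSet (Prod.fst '' M) := by
  obtain ⟨C, hC, φ, hφ, M', hM', rfl⟩ := hM.exists_measurableSet_preimage_prodMap
  have : Countable C := hC.to_subtype
  have himage : Prod.fst '' (Prod.map φ id ⁻¹' M') = φ ⁻¹' (Prod.fst '' M') := by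
    ext ω; simp
  rw [himage]
  exact (((hM'.analyticSet_image measurable_fst).nullMeasurableSet (P.map φ)).preimage
    ⟨hφ, .rfl⟩).measurable_of_complete

theorem measurableSet_setOf_nonempty (P : Measure Ω) [IsFiniteMeasure P] [P.IsComplete]
    {G : Ω → Set X} (hG : MeasurableSet {p : Ω × X | p.2 ∈ G p.1}) :
    MeasurableSet {ω | (G ω).Nonempty} := by
  convert hG.image_fst P
  ext ω; simp [Set.Nonempty]

end Projection

/-- The space `L⁰(Y; F)` of measurable selections of `Y`. -/
def measurableSelections {Ω X : Type*} [MeasurableSpace Ω] [MeasurableSpace X] (P : Measure Ω)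
    (Y : Ω → Set X) : Set (Ω → X) :=
  {ξ | Measurable ξ ∧ ∀ᵐ ω ∂P, ξ ω ∈ Y ω}

section Selection

variable {Ω X : Type*} [MeasurableSpace Ω] [MetricSpace X] [CompleteSpace X]
  [TopologicalSpace.SeparableSpace X] [MeasurableSpace X] [BorelSpace X] [Nonempty X]
  {G : Ω → Set X}

theorem exists_measurable_forall_exists_dist_lt (P : Measure Ω) [IsFiniteMeasure P]
    [P.IsComplete] (hG : MeasurableSet {p : Ω × X | p.2 ∈ G p.1}) (hne : ∀ ω, (G ω).Nonempty)
    {r : ℝ} (hr : 0 < r) : ∃ f : Ω → X, Measurable f ∧ ∀ ω, ∃ x ∈ G ω, dist x (f ω) < r := by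
  let e := TopologicalSpace.denseSeq X
  have hex : ∀ ω, ∃ n, (G ω ∩ Metric.ball (e n) r).Nonempty := fun ω => by
    obtain ⟨x, hx⟩ := hne ω
    obtain ⟨n, hn⟩ := (TopologicalSpace.denseRange_denseSeq X).exists_dist_lt x hr
    exact ⟨n, x, hx, hn⟩
  refine ⟨fun ω => e (Nat.find (hex ω)), measurable_from_nat.comp ?_,
    fun ω => Nat.find_spec (hex ω)⟩
  exact measurable_find hex fun n => measurableSet_setOf_nonempty P
    (hG.inter (measurableSet_ball.preimage measurable_snd))

theorem exists_measurable_forall_exists_dist_lt_of_forall_exists_dist_lt (P : Measure Ω)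
    [IsFiniteMeasure P] [P.IsComplete] (hG : MeasurableSet {p : Ω × X | p.2 ∈ G p.1})
    {f : Ω → X} (hf : Measurable f) {ρ : ℝ} (hfG : ∀ ω, ∃ x ∈ G ω, dist x (f ω) < ρ) {r : ℝ}
    (hr : 0 < r) :
    ∃ f' : Ω → X, Measurable f' ∧
      ∀ ω, (∃ x ∈ G ω, dist x (f' ω) < r) ∧ dist (f' ω) (f ω) < r + ρ := by
  have hG' : MeasurableSet {p : Ω × X | p.2 ∈ G p.1 ∩ Metric.ball (f p.1) ρ} :=
    hG.inter (measurableSet_lt (measurable_snd.dist (hf.comp measurable_fst)) measurable_const)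
  obtain ⟨f', hf', hf'G⟩ := exists_measurable_forall_exists_dist_lt P
    (G := fun ω => G ω ∩ Metric.ball (f ω) ρ) hG'
    (fun ω => by obtain ⟨x, hx, hxf⟩ := hfG ω; exact ⟨x, hx, hxf⟩) hr
  refine ⟨f', hf', fun ω => ?_⟩
  obtain ⟨x, ⟨hxG, hxf⟩, hxf'⟩ := hf'G ω
  exact ⟨⟨x, hxG, hxf'⟩, (dist_triangle_left _ _ x).trans_lt (add_lt_add hxf' hxf)⟩

theorem exists_measurable_seq_forall_exists_dist_lt (P : Measure Ω) [IsFiniteMeasure P]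
    [P.IsComplete] (hG : MeasurableSet {p : Ω × X | p.2 ∈ G p.1}) (hne : ∀ ω, (G ω).Nonempty) :
    ∃ u : ℕ → Ω → X, (∀ k, Measurable (u k)) ∧
      (∀ k ω, ∃ x ∈ G ω, dist x (u k ω) < (1 / 2) ^ k) ∧
      ∀ k ω, dist (u (k + 1) ω) (u k ω) < (1 / 2) ^ (k + 1) + (1 / 2) ^ k := by
  let Good (k : ℕ) := {f : Ω → X // Measurable f ∧ ∀ ω, ∃ x ∈ G ω, dist x (f ω) < (1 / 2) ^ k}
  have hstep : ∀ k (f : Good k), ∃ f' : Good (k + 1),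
      ∀ ω, dist (f'.1 ω) (f.1 ω) < (1 / 2) ^ (k + 1) + (1 / 2) ^ k := by
    rintro k ⟨f, hf, hfG⟩
    obtain ⟨f', hf', hf'G⟩ :=
      exists_measurable_forall_exists_dist_lt_of_forall_exists_dist_lt P hG hf hfG
        (r := (1 / 2) ^ (k + 1)) (by positivity)
    exact ⟨⟨f', hf', fun ω => (hf'G ω).1⟩, fun ω => (hf'G ω).2⟩
  choose next hnext using hstep
  obtain ⟨u₀, hu₀⟩ := exists_measurable_forall_exists_dist_lt P hG hne (r := (1 / 2) ^ 0) one_pos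
  let u : ∀ k, Good k := fun k => Nat.rec ⟨u₀, hu₀⟩ next k
  exact ⟨fun k => (u k).1, fun k => (u k).2.1, fun k => (u k).2.2, fun k => hnext k (u k)⟩

theorem exists_measurable_selection_of_forall_nonempty (P : Measure Ω) [IsFiniteMeasure P]
    [P.IsComplete] (hGc : ∀ ω, IsClosed (G ω)) (hG : MeasurableSet {p : Ω × X | p.2 ∈ G p.1})
    (hne : ∀ ω, (G ω).Nonempty) :
    ∃ ξ : Ω → X, Measurable ξ ∧ ∀ ω, ξ ω ∈ G ω := by
  obtain ⟨u, hu, huG, hu_succ⟩ := exists_measurable_seq_forall_exists_dist_lt P hG hne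
  have hcauchy : ∀ ω, CauchySeq (u · ω) := fun ω =>
    cauchySeq_of_le_geometric (1 / 2) 2 (by norm_num) fun k => by
      rw [dist_comm]
      linarith [hu_succ k ω, pow_succ (1 / 2 : ℝ) k, pow_pos (one_half_pos (α := ℝ)) k]
  choose ξ hξ using fun ω => cauchySeq_tendsto_of_complete (hcauchy ω)
  refine ⟨ξ, measurable_of_tendsto_metrizable hu (tendsto_pi_nhds.2 hξ), fun ω => ?_⟩
  -- The distance from `u k ω` to `G ω` is less than `2⁻ᵏ` and tends to that of `ξ ω`.
  refine ((hGc ω).mem_iff_infDist_zero (hne ω)).2 (tendsto_nhds_unique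
    (((Metric.continuous_infDist_pt _).tendsto _).comp (hξ ω)) ?_)
  refine squeeze_zero (fun _ => Metric.infDist_nonneg) (fun k => ?_)
    (tendsto_pow_atTop_nhds_zero_of_lt_one (by norm_num) (by norm_num : (1 / 2 : ℝ) < 1))
  obtain ⟨x, hx, hxu⟩ := huG k ω
  exact (Metric.infDist_le_dist_of_mem hx).trans (by rw [dist_comm]; exact hxu.le)

theorem exists_measurable_selection (P : Measure Ω) [IsFiniteMeasure P] [P.IsComplete]
    (hGc : ∀ ω, IsClosed (G ω)) (hG : MeasurableSet {p : Ω × X | p.2 ∈ G p.1}) :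
    ∃ ξ : Ω → X, Measurable ξ ∧ ∀ ω, (G ω).Nonempty → ξ ω ∈ G ω := by
  let G' ω := if (G ω).Nonempty then G ω else univ
  have hG' : {p : Ω × X | p.2 ∈ G' p.1} =
      {p | p.2 ∈ G p.1} ∪ Prod.fst ⁻¹' {ω | (G ω).Nonempty}ᶜ := by
    ext ⟨ω, x⟩
    by_cases h : (G ω).Nonempty <;> simp [G', h]
  obtain ⟨ξ, hξ, hξG⟩ := exists_measurable_selection_of_forall_nonempty P
    (fun ω => by by_cases h : (G ω).Nonempty <;> simp [G', h, hGc ω])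
    (hG' ▸ hG.union ((measurableSet_setOf_nonempty P hG).compl.preimage measurable_fst))
    (fun ω => by by_cases h : (G ω).Nonempty <;> simp [G', h])
  exact ⟨ξ, hξ, fun ω h => by simpa [G', h] using hξG ω⟩

theorem exists_measurable_dense_selections (P : Measure Ω) [IsFiniteMeasure P] [P.IsComplete]
    {Y : Ω → Set X} (hYc : ∀ ω, IsClosed (Y ω)) (hY : MeasurableSet {p : Ω × X | p.2 ∈ Y p.1}) :
    ∃ c : ℕ × ℕ → Ω → X, (∀ i, Measurable (c i)) ∧ (∀ i ω, (Y ω).Nonempty → c i ω ∈ Y ω) ∧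
      ∀ ω, Y ω ⊆ closure (range fun i => c i ω) := by
  let e := TopologicalSpace.denseSeq X
  let B : ℕ × ℕ → Set X := fun i => Metric.closedBall (e i.1) (1 / (i.2 + 1))
  have hYB : ∀ i, MeasurableSet {p : Ω × X | p.2 ∈ Y p.1 ∩ B i} := fun i =>
    hY.inter (measurableSet_closedBall.preimage measurable_snd)
  obtain ⟨ξ₀, hξ₀, hξ₀Y⟩ := exists_measurable_selection P hYc hY
  choose ζ hζ hζY using fun i => exists_measurable_selection P
    (G := fun ω => Y ω ∩ B i) (fun ω => (hYc ω).inter Metric.isClosed_closedBall) (hYB i)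
  let A : ℕ × ℕ → Set Ω := fun i => {ω | (Y ω ∩ B i).Nonempty}
  have hA : ∀ i, MeasurableSet (A i) := fun i => measurableSet_setOf_nonempty P (hYB i)
  refine ⟨fun i => (A i).piecewise (ζ i) ξ₀, fun i => (hζ i).piecewise (hA i) hξ₀,
    fun i ω hω => ?_, fun ω x hx => ?_⟩
  · dsimp only
    by_cases h : ω ∈ A i
    · rw [piecewise_eq_of_mem _ _ _ h]
      exact (hζY i ω h).1
    · rw [piecewise_eq_of_notMem _ _ _ h]
      exact hξ₀Y ω hω
  · refine Metric.mem_closure_range_iff.2 fun ε hε => ?_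
    obtain ⟨k, hk⟩ := exists_nat_one_div_lt (half_pos hε)
    obtain ⟨n, hn⟩ := (TopologicalSpace.denseRange_denseSeq X).exists_dist_lt x
      (Nat.one_div_pos_of_nat (n := k))
    have h : ω ∈ A (n, k) := ⟨x, hx, Metric.mem_closedBall.2 hn.le⟩
    refine ⟨(n, k), ?_⟩
    have hζB := Metric.mem_closedBall.1 (hζY (n, k) ω h).2
    dsimp only
    rw [piecewise_eq_of_mem _ _ _ h]
    calc dist x (ζ (n, k) ω) ≤ dist x (e n) + dist (ζ (n, k) ω) (e n) :=
          dist_triangle_right _ _ _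
      _ < ε := by linarith

theorem exists_measurableSelections_dense (P : Measure Ω) [IsFiniteMeasure P] [P.IsComplete]
    {Y : Ω → Set X} (hYc : ∀ ω, IsClosed (Y ω))
    (hY : MeasurableSet {p : Ω × X | p.2 ∈ Y p.1}) (hne : (measurableSelections P Y).Nonempty) :
    ∃ c : ℕ × ℕ → Ω → X, (∀ i, c i ∈ measurableSelections P Y) ∧
      ∀ ω, Y ω ⊆ closure (range fun i => c i ω) := by
  obtain ⟨c, hc, hcY, hcd⟩ := exists_measurable_dense_selections P hYc hY
  obtain ⟨ξ, -, hξ⟩ := hne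
  exact ⟨c, fun i => ⟨hc i, hξ.mono fun ω h => hcY i ω ⟨_, h⟩⟩, hcd⟩

end Selection

section DenseRationalParameters

variable {E : Type*} [TopologicalSpace E] [AddCommGroup E] [Module ℝ E] [ContinuousSMul ℝ E]
  {S D : Set E}

theorem IsClosed.convex_of_forall_ratCast [ContinuousAdd E] (hS : IsClosed S)
    (hSD : S ⊆ closure D)
    (h : ∀ q : ℚ, (q : ℝ) ∈ Icc 0 1 → ∀ a ∈ D, ∀ b ∈ D, (q : ℝ) • a + (1 - (q : ℝ)) • b ∈ S) :
    Convex ℝ S := by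
  intro x hx y hy a b ha hb hab
  obtain rfl : b = 1 - a := by linarith
  have hmaps : MapsTo (fun p : ℝ × E × E => p.1 • p.2.1 + (1 - p.1) • p.2.2)
      ((Icc 0 1 ∩ range Rat.cast) ×ˢ D ×ˢ D) S := by
    rintro ⟨_, a, b⟩ ⟨⟨hq, q, rfl⟩, ha, hb⟩
    exact h q hq a ha b hb
  refine hmaps.closure_left (by fun_prop) hS (?_ : (a, x, y) ∈ _)
  rw [closure_prod_eq, closure_prod_eq, closure_ordConnected_inter_rat ordConnected_Icc
    ⟨0, by simp, 1, by simp, zero_ne_one⟩, closure_Icc]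
  exact ⟨⟨ha, by linarith⟩, hSD hx, hSD hy⟩

theorem IsClosed.smul_mem_of_forall_ratCast (hS : IsClosed S) (hSD : S ⊆ closure D)
    (h : ∀ q : ℚ, 0 ≤ (q : ℝ) → ∀ a ∈ D, (q : ℝ) • a ∈ S) :
    ∀ x ∈ S, ∀ c : ℝ, 0 ≤ c → c • x ∈ S := by
  intro x hx c hc
  have hmaps : MapsTo (fun p : ℝ × E => p.1 • p.2) ((Ici 0 ∩ range Rat.cast) ×ˢ D) S := by
    rintro ⟨_, a⟩ ⟨⟨hq, q, rfl⟩, ha⟩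
    exact h q hq a ha
  refine hmaps.closure_left (by fun_prop) hS (?_ : (c, x) ∈ _)
  rw [closure_prod_eq, closure_ordConnected_inter_rat ordConnected_Ici
    ⟨0, by simp, 1, by simp, zero_ne_one⟩, closure_Ici]
  exact ⟨hc, hSD hx⟩

end DenseRationalParameters

section ConvexSelections

variable {Ω X : Type*} [MeasurableSpace Ω] [MeasurableSpace X] [NormedAddCommGroup X]
  [NormedSpace ℝ X] [CompleteSpace X] [TopologicalSpace.SeparableSpace X] [BorelSpace X]
  (P : Measure Ω) [IsFiniteMeasure P] [P.IsComplete] {Y : Ω → Set X}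

theorem convex_measurableSelections_iff (hYc : ∀ ω, IsClosed (Y ω))
    (hY : MeasurableSet {p : Ω × X | p.2 ∈ Y p.1}) (hne : (measurableSelections P Y).Nonempty) :
    Convex ℝ (measurableSelections P Y) ↔ ∀ᵐ ω ∂P, Convex ℝ (Y ω) := by
  refine ⟨fun hconv => ?_, fun h ξ hξ η hη a b ha hb hab => ?_⟩
  · obtain ⟨c, hc, hcd⟩ := exists_measurableSelections_dense P hYc hY hne
    have hcomb : ∀ᵐ ω ∂P, ∀ q : ℚ, (q : ℝ) ∈ Icc 0 1 → ∀ i j,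
        (q : ℝ) • c i ω + (1 - (q : ℝ)) • c j ω ∈ Y ω :=
      ae_all_iff.2 fun q => eventually_imp_distrib_left.2 fun hq => ae_all_iff.2 fun i =>
        ae_all_iff.2 fun j => (hconv (hc i) (hc j) hq.1 (sub_nonneg.2 hq.2) (by ring)).2
    filter_upwards [hcomb] with ω hω
    refine (hYc ω).convex_of_forall_ratCast (hcd ω) ?_
    rintro q hq _ ⟨i, rfl⟩ _ ⟨j, rfl⟩
    exact hω q hq i j
  · refine ⟨(hξ.1.const_smul a).add (hη.1.const_smul b), ?_⟩
    filter_upwards [hξ.2, hη.2, h] with ω hξω hηω hω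
    exact hω hξω hηω ha hb hab

theorem forall_smul_mem_measurableSelections_iff (hYc : ∀ ω, IsClosed (Y ω))
    (hY : MeasurableSet {p : Ω × X | p.2 ∈ Y p.1}) (hne : (measurableSelections P Y).Nonempty) :
    (∀ ξ ∈ measurableSelections P Y, ∀ c : ℝ, 0 ≤ c → c • ξ ∈ measurableSelections P Y) ↔
      ∀ᵐ ω ∂P, ∀ x ∈ Y ω, ∀ c : ℝ, 0 ≤ c → c • x ∈ Y ω := by
  refine ⟨fun hcone => ?_, fun h ξ hξ r hr => ?_⟩
  · obtain ⟨c, hc, hcd⟩ := exists_measurableSelections_dense P hYc hY hne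
    have hsmul : ∀ᵐ ω ∂P, ∀ q : ℚ, 0 ≤ (q : ℝ) → ∀ i, (q : ℝ) • c i ω ∈ Y ω :=
      ae_all_iff.2 fun q => eventually_imp_distrib_left.2 fun hq => ae_all_iff.2 fun i =>
        (hcone _ (hc i) q hq).2
    filter_upwards [hsmul] with ω hω
    refine (hYc ω).smul_mem_of_forall_ratCast (hcd ω) ?_
    rintro q hq _ ⟨i, rfl⟩
    exact hω q hq i
  · refine ⟨hξ.1.const_smul r, ?_⟩
    filter_upwards [hξ.2, h] with ω hξω hω
    exact hω _ hξω r hr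

end ConvexSelections

theorem stmt2_general {Ω X : Type*} [MeasurableSpace Ω] [NormedAddCommGroup X] [NormedSpace ℝ X]
    [CompleteSpace X] [TopologicalSpace.SeparableSpace X] [MeasurableSpace X] [BorelSpace X]
    (P : Measure Ω) [IsProbabilityMeasure P] (hPc : P.IsComplete)
    (Ξ : Set (Ω → X)) (hne : Ξ.Nonempty)
    (Y : Ω → Set X) (hYcl : ∀ ω, IsClosed (Y ω))
    (hYmeas : MeasurableSet {p : Ω × X | p.2 ∈ Y p.1})
    (hΞ : Ξ = {ξ : Ω → X | Measurable ξ ∧ ∀ᵐ ω ∂P, ξ ω ∈ Y ω}) :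
    (Convex ℝ Ξ ↔ ∀ᵐ ω ∂P, Convex ℝ (Y ω)) ∧
    ((∀ ξ ∈ Ξ, ∀ c : ℝ, 0 ≤ c → c • ξ ∈ Ξ) ↔
      ∀ᵐ ω ∂P, ∀ x ∈ Y ω, ∀ c : ℝ, 0 ≤ c → c • x ∈ Y ω) := by
  subst hΞ
  have := hPc
  exact ⟨convex_measurableSelections_iff P hYcl hYmeas hne,
    forall_smul_mem_measurableSelections_iff P hYcl hYmeas hne⟩

/-- Theorem 2.4, convexity/cone part: a decomposable probability-closed family
Ξ = L⁰(Y;F) is convex (a cone) iff Y is a.s. convex (a.s. a cone). -/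
theorem stmt2 {Ω X : Type*} [MeasurableSpace Ω] [NormedAddCommGroup X] [NormedSpace ℝ X]
    [CompleteSpace X] [TopologicalSpace.SeparableSpace X] [MeasurableSpace X] [BorelSpace X]
    (P : Measure Ω) [IsProbabilityMeasure P] (hPc : P.IsComplete)
    (Ξ : Set (Ω → X)) (hne : Ξ.Nonempty)
    (hdec : ∀ ξ ∈ Ξ, ∀ η ∈ Ξ, ∀ A : Set Ω, MeasurableSet A →
      (fun ω => if ω ∈ A then ξ ω else η ω) ∈ Ξ)
    (hclosed : ∀ γ : Ω → X, Measurable γ →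
      (∃ f : ℕ → Ω → X, (∀ n, f n ∈ Ξ) ∧ TendstoInMeasure P f Filter.atTop γ) → γ ∈ Ξ)
    (Y : Ω → Set X) (hYcl : ∀ ω, IsClosed (Y ω))
    (hYmeas : MeasurableSet {p : Ω × X | p.2 ∈ Y p.1})
    (hΞ : Ξ = {ξ : Ω → X | Measurable ξ ∧ ∀ᵐ ω ∂P, ξ ω ∈ Y ω}) :
    (Convex ℝ Ξ ↔ ∀ᵐ ω ∂P, Convex ℝ (Y ω)) ∧
    ((∀ ξ ∈ Ξ, ∀ c : ℝ, 0 ≤ c → c • ξ ∈ Ξ) ↔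
      ∀ᵐ ω ∂P, ∀ x ∈ Y ω, ∀ c : ℝ, 0 ≤ c → c • x ∈ Y ω) :=
  stmt2_general P hPc Ξ hne Y hYcl hYmeas hΞ
end

section
/- Let Ξ ⊆ L^0(X;F) be infinitely F-decomposable (for every sequence ξ_n ∈ Ξ and every countable F-measurable partition {A_n} of Ω, Σ_n ξ_n 1_{A_n} ∈ Ξ), and let G be an a.s. nonempty random open set. Then L^0(G;F) + Ξ = L^0(G;F) + cl_0 Ξ, where cl_0 denotes closure in probability and L^0(G;F) is the set of measurable selections of G. -/
/-!
Let `γ + ξ` with `γ` a selection of `G` and `ξ` the limit in probability of `fₙ ∈ Ξ`. Along a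
subsequence `fₙ → ξ` almost surely, and since `G ω` is open, `γ ω + ξ ω - fₙ ω ∈ G ω` for
some `n` at almost every `ω`. Taking the first such `n` partitions `Ω` measurably, and gluing
the `fₙ` along this partition yields `g ∈ Ξ` with `γ + ξ - g` a selection of `G`.
-/

open MeasureTheory Filter Topology

theorem MeasureTheory.tendstoInMeasure_const {α ι E : Type*} [MeasurableSpace α]
    [PseudoEMetricSpace E] (μ : Measure α) (l : Filter ι) (g : α → E) :
    TendstoInMeasure μ (fun _ => g) l g := fun ε hε => by
  simpa [not_le.mpr hε] using tendsto_const_nhds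

section Decomposable

variable {Ω X : Type*} [MeasurableSpace Ω]

def InfinitelyDecomposable (Ξ : Set (Ω → X)) : Prop :=
  ∀ f : ℕ → Ω → X, (∀ n, f n ∈ Ξ) →
    ∀ A : ℕ → Set Ω, (∀ n, MeasurableSet (A n)) →
      Pairwise (Function.onFun Disjoint A) → (⋃ n, A n) = Set.univ →
      ∀ g : Ω → X, (∀ n, ∀ ω ∈ A n, g ω = f n ω) → g ∈ Ξ

theorem InfinitelyDecomposable.mem_of_index {Ξ : Set (Ω → X)} (hΞ : InfinitelyDecomposable Ξ)
    {f : ℕ → Ω → X} (hf : ∀ n, f n ∈ Ξ) {idx : Ω → ℕ} (hidx : Measurable idx) :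
    (fun ω => f (idx ω) ω) ∈ Ξ := by
  refine hΞ f hf (fun k => idx ⁻¹' {k}) (fun k => hidx (measurableSet_singleton k)) ?_ ?_ _ ?_
  · intro i j hij
    exact Set.disjoint_left.mpr fun ω hi hj => hij (hi.symm.trans hj)
  · ext ω
    simp
  · rintro k ω rfl
    rfl

theorem exists_measurable_index_mem {B : ℕ → Set Ω} (hB : ∀ k, MeasurableSet (B k)) :
    ∃ idx : Ω → ℕ, Measurable idx ∧ ∀ ω ∈ ⋃ k, B k, ω ∈ B (idx ω) := by
  classical
  let p : Ω → ℕ → Prop := fun ω k => ω ∈ B k ∨ ω ∉ ⋃ j, B j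
  have hp : ∀ ω, ∃ k, p ω k := fun ω => by
    by_cases hω : ω ∈ ⋃ j, B j
    · obtain ⟨k, hk⟩ := Set.mem_iUnion.mp hω
      exact ⟨k, Or.inl hk⟩
    · exact ⟨0, Or.inr hω⟩
  refine ⟨fun ω => Nat.find (hp ω),
    measurable_find hp fun k => (hB k).union (MeasurableSet.iUnion hB).compl, fun ω hω => ?_⟩
  exact (Nat.find_spec (hp ω)).resolve_right (not_not.mpr hω)

theorem measurableSet_setOf_mem_of_measurableSet_graph [MeasurableSpace X] {G : Ω → Set X}
    (hG : MeasurableSet {p : Ω × X | p.2 ∈ G p.1}) {h : Ω → X} (hh : Measurable h) :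
    MeasurableSet {ω | h ω ∈ G ω} :=
  measurable_id.prodMk hh hG

theorem InfinitelyDecomposable.exists_sub_mem_of_tendstoInMeasure [SeminormedAddCommGroup X]
    [MeasurableSpace X] [MeasurableSub₂ X] {μ : Measure Ω} {Ξ : Set (Ω → X)}
    (hΞ : InfinitelyDecomposable Ξ) (hmeas : ∀ ξ ∈ Ξ, Measurable ξ) {G : Ω → Set X}
    (hGgr : MeasurableSet {p : Ω × X | p.2 ∈ G p.1}) (hGo : ∀ ω, IsOpen (G ω))
    {x : Ω → X} (hx : Measurable x) {f : ℕ → Ω → X} (hfΞ : ∀ n, f n ∈ Ξ) {ξ : Ω → X}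
    (hf : TendstoInMeasure μ f atTop ξ) (hxξ : ∀ᵐ ω ∂μ, x ω - ξ ω ∈ G ω) :
    ∃ g ∈ Ξ, ∀ᵐ ω ∂μ, x ω - g ω ∈ G ω := by
  obtain ⟨ns, -, hae⟩ := hf.exists_seq_tendsto_ae
  let B : ℕ → Set Ω := fun k => {ω | x ω - f (ns k) ω ∈ G ω}
  have hB : ∀ k, MeasurableSet (B k) := fun k =>
    measurableSet_setOf_mem_of_measurableSet_graph hGgr (hx.sub (hmeas _ (hfΞ (ns k))))
  obtain ⟨idx, hidx, hidxB⟩ := exists_measurable_index_mem hB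
  refine ⟨fun ω => f (ns (idx ω)) ω, hΞ.mem_of_index (fun k => hfΞ (ns k)) hidx, ?_⟩
  filter_upwards [hxξ, hae] with ω hωG hωξ
  have hshift : Tendsto (fun k => x ω - f (ns k) ω) atTop (𝓝 (x ω - ξ ω)) :=
    tendsto_const_nhds.sub hωξ
  obtain ⟨k, hk⟩ := (hshift.eventually ((hGo ω).mem_nhds hωG)).exists
  exact hidxB ω (Set.mem_iUnion.mpr ⟨k, hk⟩)

end Decomposable

theorem stmt5_general {Ω X : Type*} [MeasurableSpace Ω] [NormedAddCommGroup X]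
    [TopologicalSpace.SeparableSpace X] [MeasurableSpace X] [BorelSpace X]
    (P : Measure Ω)
    (Ξ : Set (Ω → X)) (hmeas : ∀ ξ ∈ Ξ, Measurable ξ)
    (hdec : ∀ f : ℕ → Ω → X, (∀ n, f n ∈ Ξ) →
      ∀ A : ℕ → Set Ω, (∀ n, MeasurableSet (A n)) →
        Pairwise (Function.onFun Disjoint A) → (⋃ n, A n) = Set.univ →
        ∀ g : Ω → X, (∀ n, ∀ ω ∈ A n, g ω = f n ω) → g ∈ Ξ)
    (G : Ω → Set X) (hGgr : MeasurableSet {p : Ω × X | p.2 ∈ G p.1})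
    (hGo : ∀ ω, IsOpen (G ω)) :
    Set.image2 (· + ·) {γ : Ω → X | Measurable γ ∧ ∀ᵐ ω ∂P, γ ω ∈ G ω} Ξ =
      Set.image2 (· + ·) {γ : Ω → X | Measurable γ ∧ ∀ᵐ ω ∂P, γ ω ∈ G ω}
        {γ : Ω → X | Measurable γ ∧ ∃ f : ℕ → Ω → X, (∀ n, f n ∈ Ξ) ∧
          TendstoInMeasure P f Filter.atTop γ} := by
  refine Set.Subset.antisymm (Set.image2_subset_left fun ξ hξ => ?_) ?_
  · exact ⟨hmeas ξ hξ, fun _ => ξ, fun _ => hξ, tendstoInMeasure_const P _ ξ⟩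
  rintro _ ⟨γ, ⟨hγm, hγG⟩, ξ, ⟨hξm, f, hfΞ, hf⟩, rfl⟩
  have hx : Measurable (γ + ξ) := hγm.add hξm
  obtain ⟨g, hgΞ, hgG⟩ := InfinitelyDecomposable.exists_sub_mem_of_tendstoInMeasure hdec hmeas
    hGgr hGo hx hfΞ hf (by simpa using hγG)
  exact Set.mem_image2.mpr ⟨γ + ξ - g, ⟨hx.sub (hmeas g hgΞ), hgG⟩, g, hgΞ, sub_add_cancel _ _⟩

/-- Proposition 2.10: for an infinitely F-decomposable family Ξ and an a.s. nonempty
random open set G, L⁰(G;F) + Ξ = L⁰(G;F) + cl₀ Ξ. -/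
theorem stmt5 {Ω X : Type*} [MeasurableSpace Ω] [NormedAddCommGroup X] [NormedSpace ℝ X]
    [CompleteSpace X] [TopologicalSpace.SeparableSpace X] [MeasurableSpace X] [BorelSpace X]
    (P : Measure Ω) [IsProbabilityMeasure P] (hPc : P.IsComplete)
    (Ξ : Set (Ω → X)) (hmeas : ∀ ξ ∈ Ξ, Measurable ξ)
    (hdec : ∀ f : ℕ → Ω → X, (∀ n, f n ∈ Ξ) →
      ∀ A : ℕ → Set Ω, (∀ n, MeasurableSet (A n)) →
        Pairwise (Function.onFun Disjoint A) → (⋃ n, A n) = Set.univ →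
        ∀ g : Ω → X, (∀ n, ∀ ω ∈ A n, g ω = f n ω) → g ∈ Ξ)
    (G : Ω → Set X) (hGgr : MeasurableSet {p : Ω × X | p.2 ∈ G p.1})
    (hGo : ∀ ω, IsOpen (G ω)) (hGne : ∀ᵐ ω ∂P, (G ω).Nonempty) :
    Set.image2 (· + ·) {γ : Ω → X | Measurable γ ∧ ∀ᵐ ω ∂P, γ ω ∈ G ω} Ξ =
      Set.image2 (· + ·) {γ : Ω → X | Measurable γ ∧ ∀ᵐ ω ∂P, γ ω ∈ G ω}
        {γ : Ω → X | Measurable γ ∧ ∃ f : ℕ → Ω → X, (∀ n, f n ∈ Ξ) ∧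
          TendstoInMeasure P f Filter.atTop γ} :=
  stmt5_general P Ξ hmeas hdec G hGgr hGo
end

section
/- Let Ξ ⊆ L^0(X;F) be infinitely F-decomposable. For every γ in the closure of Ξ in probability and every F-measurable random variable α with values in (0,∞), there exists ξ ∈ Ξ such that ‖γ − ξ‖ ≤ α almost surely. -/
open MeasureTheory

/-- Corollary 2.11: for an infinitely F-decomposable family Ξ, every γ in the closure of Ξ
in probability can be approximated within any positive random accuracy α by an element of Ξ. -/
theorem stmt6 {Ω X : Type*} [MeasurableSpace Ω] [NormedAddCommGroup X] [NormedSpace ℝ X]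
    [CompleteSpace X] [TopologicalSpace.SeparableSpace X] [MeasurableSpace X] [BorelSpace X]
    (P : Measure Ω) [IsProbabilityMeasure P] (hPc : P.IsComplete)
    (Ξ : Set (Ω → X)) (hmeas : ∀ ξ ∈ Ξ, Measurable ξ)
    (hdec : ∀ f : ℕ → Ω → X, (∀ n, f n ∈ Ξ) →
      ∀ A : ℕ → Set Ω, (∀ n, MeasurableSet (A n)) →
        Pairwise (Function.onFun Disjoint A) → (⋃ n, A n) = Set.univ →
        ∀ g : Ω → X, (∀ n, ∀ ω ∈ A n, g ω = f n ω) → g ∈ Ξ)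
    (γ : Ω → X) (hγ : Measurable γ)
    (hγcl : ∃ f : ℕ → Ω → X, (∀ n, f n ∈ Ξ) ∧ TendstoInMeasure P f Filter.atTop γ)
    (α : Ω → ℝ) (hα : Measurable α) (hαpos : ∀ ω, 0 < α ω) :
    ∃ ξ ∈ Ξ, ∀ᵐ ω ∂P, ‖γ ω - ξ ω‖ ≤ α ω := by
  classical
  obtain ⟨f, hf, htend⟩ := hγcl
  obtain ⟨ns, -, hae⟩ := htend.exists_seq_tendsto_ae
  set h : ℕ → Ω → X := fun k => f (ns k) with hh
  have hhΞ : ∀ k, h k ∈ Ξ := fun k => hf (ns k)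
  set B : ℕ → Set Ω := fun k => {ω | ‖γ ω - h k ω‖ ≤ α ω} with hB
  have hBmeas : ∀ k, MeasurableSet (B k) := fun k =>
    measurableSet_le ((hγ.sub (hmeas _ (hhΞ k))).norm) hα
  set E : Ω → Prop := fun ω => ∃ k, ‖γ ω - h k ω‖ ≤ α ω with hE
  set idx : Ω → ℕ := fun ω => if hω : E ω then Nat.find hω else 0 with hidx
  set A : ℕ → Set Ω := fun k => {ω | idx ω = k} with hA
  have hAmeas : ∀ k, MeasurableSet (A k) := by
    intro k
    have hEmeas : MeasurableSet {ω | E ω} := by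
      have : {ω | E ω} = ⋃ k, B k := by ext ω; simp [hE, hB]
      rw [this]; exact MeasurableSet.iUnion hBmeas
    have heq : A k = (B k ∩ ⋂ j ∈ Finset.range k, (B j)ᶜ) ∪
        (if k = 0 then {ω | E ω}ᶜ else ∅) := by
      ext ω
      by_cases hω : E ω
      · constructor
        · intro hk
          have hk' : Nat.find hω = k := by
            simp only [hA, Set.mem_setOf_eq, hidx, dif_pos hω] at hk
            exact hk
          left
          refine ⟨hk' ▸ Nat.find_spec hω, ?_⟩
          simp only [Set.mem_iInter, Set.mem_compl_iff, Finset.mem_range]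
          intro j hj
          exact Nat.find_min hω (hk' ▸ hj)
        · rintro (⟨h1, h2⟩ | h2)
          · simp only [Set.mem_iInter, Set.mem_compl_iff, Finset.mem_range] at h2
            have hle : Nat.find hω ≤ k := Nat.find_min' hω h1
            have hge : k ≤ Nat.find hω :=
              Nat.le_of_not_lt fun hlt => h2 _ hlt (Nat.find_spec hω)
            simp [hA, hidx, dif_pos hω, le_antisymm hle hge]
          · by_cases hk0 : k = 0 <;> simp [hk0] at h2 <;> exact absurd hω h2
      · constructor
        · intro hk
          have hk' : k = 0 := by
            simp only [hA, Set.mem_setOf_eq, hidx, dif_neg hω] at hk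
            exact hk.symm
          right
          simp [hk', hω]
        · intro _
          simp [hA, hidx, dif_neg hω]
          by_cases hk0 : k = 0
          · simp [hk0]
          · exfalso
            rcases ‹ω ∈ _ ∪ _› with hmem | hmem
            · exact hω ⟨k, hmem.1⟩
            · simp [hk0] at hmem
    rw [heq]
    refine ((hBmeas k).inter (MeasurableSet.biInter (Set.to_countable _)
      fun j _ => (hBmeas j).compl)).union ?_
    by_cases hk0 : k = 0 <;> simp [hk0, hEmeas.compl]
  have hAdisj : Pairwise (Function.onFun Disjoint A) := by
    intro i j hij
    exact Set.disjoint_left.mpr fun ω h1 h2 => hij (h1.symm.trans h2)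
  have hAunion : (⋃ n, A n) = Set.univ := by
    ext ω
    simp only [Set.mem_iUnion, Set.mem_univ, iff_true]
    exact ⟨idx ω, rfl⟩
  set g : Ω → X := fun ω => h (idx ω) ω with hg
  have hgΞ : g ∈ Ξ := hdec h hhΞ A hAmeas hAdisj hAunion g
    (fun n ω hω => by simp only [hg]; rw [hω])
  refine ⟨g, hgΞ, ?_⟩
  filter_upwards [hae] with ω hω
  have hEω : E ω := by
    have ht : Filter.Tendsto (fun i => ‖γ ω - h i ω‖) Filter.atTop (nhds 0) := by
      have := (Filter.Tendsto.const_sub (γ ω) hω).norm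
      simpa using this
    obtain ⟨k, hk⟩ := (ht.eventually (gt_mem_nhds (hαpos ω))).exists
    exact ⟨k, hk.le⟩
  have : g ω = h (Nat.find hEω) ω := by simp [hg, hidx, dif_pos hEω]
  rw [this]
  exact Nat.find_spec hEω
end

section
/- Let X be a random closed set in a separable Banach space and H a sub-σ-algebra of F. Then the conditional core m(X|H) — the largest H-measurable random closed set a.s. contained in X — exists; moreover if X is a.s. convex then m(X|H) is a.s. convex, and if X is a.s. a cone then m(X|H) is a.s. a cone. -/
open MeasureTheory Set Filter Topology
open scoped ENNReal NNReal

set_option maxHeartbeats 1000000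

namespace Stmt12Aux


lemma le_add_of_iSup {ι : Sort*} [Nonempty ι] {b : ι → ℝ≥0∞} (ha : (⨆ i, b i) ≠ ⊤)
    {ε : ℝ≥0∞} (hε : ε ≠ 0) : ∃ i, (⨆ j, b j) ≤ b i + ε := by
  by_contra h'
  push_neg at h'
  set a := ⨆ j, b j with hadef
  obtain i0 := Classical.arbitrary ι
  have hεa : ε < a := lt_of_le_of_lt le_add_self (h' i0)
  have hεtop : ε ≠ ⊤ := fun h => not_top_lt (a := a) (h ▸ hεa)
  have hb : ∀ i, b i ≤ a - ε := fun i =>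
    ENNReal.le_sub_of_add_le_right hεtop (h' i).le
  have h1 : a ≤ a - ε := iSup_le hb
  have h0 : a ≠ 0 := fun h => by simp [h] at hεa
  exact absurd (h1.trans_lt (ENNReal.sub_lt_self ha h0 hε)) (lt_irrefl _)


lemma le_of_forall_nat_inv {a b : ℝ≥0∞} (hb : b ≠ ⊤)
    (h : ∀ n : ℕ, a ≤ b + ((n : ℝ≥0∞) + 1)⁻¹) : a ≤ b := by
  refine ENNReal.le_of_forall_pos_le_add fun ε hε _ => ?_
  obtain ⟨n, hn⟩ := ENNReal.exists_inv_nat_lt (a := (ε : ℝ≥0∞)) (by exact_mod_cast hε.ne')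
  refine (h n).trans (add_le_add_right ?_ b)
  refine le_of_lt (lt_of_le_of_lt ?_ hn)
  gcongr
  exact le_self_add

/-- The sets `{x | ∀ i < n, x i ≤ σ i}`. -/
def Cs (σ : ℕ → ℕ) (n : ℕ) : Set (ℕ → ℕ) := {x | ∀ i, i < n → x i ≤ σ i}

lemma Cs_congr {σ σ' : ℕ → ℕ} {n : ℕ} (h : ∀ i, i < n → σ i = σ' i) : Cs σ n = Cs σ' n := by
  ext x; exact ⟨fun hx i hi => (h i hi) ▸ hx i hi, fun hx i hi => (h i hi) ▸ hx i hi⟩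

lemma Cs_antitone (σ : ℕ → ℕ) : Antitone (Cs σ) := by
  intro n m hnm x hx i hi
  exact hx i (lt_of_lt_of_le hi hnm)

lemma Cs_update (σ : ℕ → ℕ) (n k : ℕ) :
    Cs (Function.update σ n k) (n + 1) = Cs σ n ∩ {x | x n ≤ k} := by
  ext x
  constructor
  · intro hx
    refine ⟨fun i hi => ?_, ?_⟩
    · have := hx i (hi.trans (Nat.lt_succ_self n))
      rwa [Function.update_of_ne hi.ne] at this
    · have := hx n (Nat.lt_succ_self n)
      rwa [Function.update_self] at this
  · rintro ⟨h1, h2⟩ i hi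
    rcases Nat.lt_succ_iff_lt_or_eq.1 hi with hi' | rfl
    · rw [Function.update_of_ne hi'.ne]; exact h1 i hi'
    · rw [Function.update_self]; exact h2

/-- Key step: one can truncate one more coordinate while losing at most `δ` of outer measure. -/
lemma step_exists {Y : Type*} [TopologicalSpace Y] [MeasurableSpace Y]
    (μ : Measure Y) [IsFiniteMeasure μ] {f : (ℕ → ℕ) → Y}
    (σ : ℕ → ℕ) (n : ℕ) {δ : ℝ≥0∞} (hδ : δ ≠ 0) :
    ∃ k : ℕ, μ (f '' Cs σ n) ≤ μ (f '' Cs (Function.update σ n k) (n + 1)) + δ := by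
  have hset : Cs σ n = ⋃ k, (Cs σ n ∩ {x | x n ≤ k}) := by
    ext x
    constructor
    · intro hx
      exact mem_iUnion.2 ⟨x n, hx, show x n ≤ x n from le_refl _⟩
    · intro hx
      obtain ⟨k, hk, _⟩ := mem_iUnion.1 hx
      exact hk
  have hU : f '' Cs σ n = ⋃ k, f '' (Cs σ n ∩ {x | x n ≤ k}) := by
    rw [← image_iUnion, ← hset]
  have hmono : Monotone fun k => f '' (Cs σ n ∩ {x | x n ≤ k}) := by
    intro k k' hk
    exact image_mono (inter_subset_inter_right _ fun x hx => le_trans hx hk)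
  have hsup : μ (f '' Cs σ n) = ⨆ k, μ (f '' (Cs σ n ∩ {x | x n ≤ k})) := by
    rw [hU, hmono.measure_iUnion]
  obtain ⟨k, hk⟩ := le_add_of_iSup (b := fun k => μ (f '' (Cs σ n ∩ {x | x n ≤ k})))
    (by rw [← hsup]; exact measure_ne_top _ _) hδ
  refine ⟨k, ?_⟩
  rw [hsup, Cs_update]
  exact hk



lemma Cs_zero (σ : ℕ → ℕ) : Cs σ 0 = univ := by
  ext x; simp [Cs]

/-- Inner approximation of the range of a continuous function from Baire space
by a measurable subset, up to `ε`. -/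
theorem range_inner_approx {Y : Type*} [TopologicalSpace Y] [T2Space Y]
    [FirstCountableTopology Y] [MeasurableSpace Y] [OpensMeasurableSpace Y]
    (μ : Measure Y) [IsFiniteMeasure μ] {f : (ℕ → ℕ) → Y} (hf : Continuous f)
    {ε : ℝ≥0∞} (hε : ε ≠ 0) :
    ∃ K : Set Y, MeasurableSet K ∧ K ⊆ range f ∧ μ (range f) ≤ μ K + ε := by
  obtain ⟨δ, hδpos, hδsum⟩ := ENNReal.exists_pos_sum_of_countable hε ℕ
  set Inv : (ℕ → ℕ) → ℕ → Prop := fun σ n =>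
    ∀ m, m ≤ n → μ (range f) ≤ μ (f '' Cs σ m) + ∑ i ∈ Finset.range m, (δ i : ℝ≥0∞) with hInv
  have base : Inv (fun _ => 0) 0 := by
    intro m hm
    rw [Nat.le_zero.1 hm]
    simp [Cs_zero, image_univ]
  have key : ∀ (σ : ℕ → ℕ) (n : ℕ), ∃ k,
      μ (f '' Cs σ n) ≤ μ (f '' Cs (Function.update σ n k) (n + 1)) + δ n :=
    fun σ n => step_exists μ σ n (by exact_mod_cast (hδpos n).ne')
  have hstep : ∀ (n : ℕ) (σ : ℕ → ℕ), Inv σ n →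
      Inv (Function.update σ n (key σ n).choose) (n + 1) := by
    intro n σ hσ m hm
    rcases eq_or_lt_of_le hm with rfl | hlt
    · have h1 := hσ n le_rfl
      have h2 := (key σ n).choose_spec
      calc μ (range f) ≤ μ (f '' Cs σ n) + ∑ i ∈ Finset.range n, (δ i : ℝ≥0∞) := h1
        _ ≤ (μ (f '' Cs (Function.update σ n (key σ n).choose) (n + 1)) + δ n)
            + ∑ i ∈ Finset.range n, (δ i : ℝ≥0∞) := add_le_add_left h2 _
        _ = μ (f '' Cs (Function.update σ n (key σ n).choose) (n + 1))
            + ∑ i ∈ Finset.range (n + 1), (δ i : ℝ≥0∞) := by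
            rw [Finset.sum_range_succ]; ring
    · have hmn : m ≤ n := Nat.lt_succ_iff.1 hlt
      have h2 : Cs (Function.update σ n (key σ n).choose) m = Cs σ m :=
        Cs_congr fun i hi => Function.update_of_ne (Nat.ne_of_lt (lt_of_lt_of_le hi hmn)) _ _
      rw [h2]
      exact hσ m hmn
  let T : ∀ n : ℕ, {σ : ℕ → ℕ // Inv σ n} := fun n =>
    Nat.rec ⟨fun _ => 0, base⟩ (fun n p => ⟨_, hstep n p.1 p.2⟩) n
  let σf : ℕ → ℕ := fun i => (T (i + 1)).1 i
  have hcoh : ∀ n i, i < n → (T n).1 i = σf i := by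
    intro n
    induction n with
    | zero => exact fun i hi => absurd hi (Nat.not_lt_zero i)
    | succ n ih =>
      intro i hi
      rcases Nat.lt_succ_iff_lt_or_eq.1 hi with hi' | rfl
      · have h1 : (T (n + 1)).1 i = (T n).1 i :=
          Function.update_of_ne hi'.ne _ _
        rw [h1, ih i hi']
      · rfl
  have hbound : ∀ n, μ (range f) ≤ μ (f '' Cs σf n) + ε := by
    intro n
    have h1 := (T n).2 n le_rfl
    have h2 : Cs (T n).1 n = Cs σf n := Cs_congr fun i hi => hcoh n i hi
    rw [h2] at h1
    refine h1.trans (add_le_add_right ?_ _)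
    exact le_of_lt (lt_of_le_of_lt (ENNReal.sum_le_tsum _) hδsum)
  refine ⟨⋂ n, closure (f '' Cs σf n), MeasurableSet.iInter fun n =>
    isClosed_closure.measurableSet, ?_, ?_⟩
  · -- K ⊆ range f
    intro y hy
    obtain ⟨V, hV⟩ := (𝓝 y).exists_antitone_basis
    have hne : ∀ n : ℕ, ∃ x, x ∈ Cs σf n ∧ f x ∈ V n := by
      intro n
      have hyn : y ∈ closure (f '' Cs σf n) := mem_iInter.1 hy n
      have hVn : V n ∈ 𝓝 y := hV.1.mem_of_mem trivial
      obtain ⟨v, hv1, hv2⟩ := mem_closure_iff_nhds.1 hyn (V n) hVn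
      obtain ⟨x, hx1, rfl⟩ := hv2
      exact ⟨x, hx1, hv1⟩
    choose x hx1 hx2 using hne
    set M : ℕ → ℕ := fun i => max (σf i) ((Finset.range (i + 1)).sup fun n => x n i) with hM
    have hmem : ∀ n, x n ∈ Set.pi univ fun i => Iic (M i) := by
      intro n i _
      rcases lt_or_ge i n with hi | hi
      · exact le_trans (hx1 n i hi) (le_max_left _ _)
      · have h1 : x n i ≤ (Finset.range (i + 1)).sup fun n => x n i :=
          Finset.le_sup (f := fun n => x n i) (Finset.mem_range.2 (Nat.lt_succ_of_le hi))
        exact le_trans h1 (le_max_right _ _)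
    have hcomp : IsCompact (Set.pi univ fun i => Iic (M i)) :=
      isCompact_univ_pi fun i => (Set.finite_Iic (M i)).isCompact
    have hle : Filter.map x atTop ≤ 𝓟 (Set.pi univ fun i => Iic (M i)) := by
      rw [le_principal_iff]
      exact Filter.mem_map.2 (Filter.Eventually.of_forall hmem)
    obtain ⟨z, _, hz⟩ := hcomp.exists_clusterPt hle
    have htend : Tendsto (fun n => f (x n)) atTop (𝓝 y) := Filter.HasAntitoneBasis.tendsto hV hx2
    have hfz : NeBot (𝓝 (f z) ⊓ 𝓝 y) := by
      have h1 : NeBot (𝓝 z ⊓ Filter.map x atTop) := hz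
      have h2 : Filter.map f (𝓝 z ⊓ Filter.map x atTop) ≤ 𝓝 (f z) ⊓ 𝓝 y := by
        refine le_inf ?_ ?_
        · exact le_trans (Filter.map_mono inf_le_left) (hf.tendsto z)
        · refine le_trans (Filter.map_mono inf_le_right) ?_
          rw [Filter.map_map]
          exact htend
      exact Filter.NeBot.mono (Filter.NeBot.map h1 f) h2
    exact ⟨z, (eq_of_nhds_neBot hfz).symm ▸ rfl⟩
  · -- measure bound
    have hanti : Antitone fun n => closure (f '' Cs σf n) := fun n m h =>
      closure_mono (image_mono (Cs_antitone σf h))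
    have hK : μ (⋂ n, closure (f '' Cs σf n)) = ⨅ n, μ (closure (f '' Cs σf n)) :=
      hanti.measure_iInter (fun n => isClosed_closure.measurableSet.nullMeasurableSet)
        ⟨0, measure_ne_top _ _⟩
    rw [hK, ENNReal.iInf_add]
    exact le_iInf fun n => (hbound n).trans
      (add_le_add_left (measure_mono subset_closure) ε)

/-- Capacitability: an analytic set contains a measurable subset of full outer measure. -/
theorem analytic_exists_measurable_subset {Y : Type*} [TopologicalSpace Y] [T2Space Y]
    [FirstCountableTopology Y] [MeasurableSpace Y] [OpensMeasurableSpace Y]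
    (μ : Measure Y) [IsFiniteMeasure μ] {A : Set Y} (hA : MeasureTheory.AnalyticSet A) :
    ∃ S : Set Y, MeasurableSet S ∧ S ⊆ A ∧ μ (A \ S) = 0 := by
  rw [MeasureTheory.AnalyticSet] at hA
  rcases hA with rfl | ⟨f, hf, rfl⟩
  · exact ⟨∅, MeasurableSet.empty, Subset.rfl, by simp⟩
  have hK : ∀ n : ℕ, ∃ K : Set Y, MeasurableSet K ∧ K ⊆ range f ∧
      μ (range f) ≤ μ K + ((n : ℝ≥0∞) + 1)⁻¹ := by
    intro n
    refine range_inner_approx μ hf ?_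
    exact ENNReal.inv_ne_zero.2 (by simp)
  choose K hKmeas hKsub hKle using hK
  refine ⟨⋃ n, K n, MeasurableSet.iUnion hKmeas, iUnion_subset hKsub, ?_⟩
  have hμle : μ (range f) ≤ μ (⋃ n, K n) := by
    refine le_of_forall_nat_inv (measure_ne_top _ _) fun n => ?_
    exact (hKle n).trans (add_le_add_left (measure_mono (subset_iUnion K n)) _)
  obtain ⟨H, hH1, hH2, hH3⟩ := exists_measurable_superset μ (range f)
  have hsub : range f \ ⋃ n, K n ⊆ H \ ⋃ n, K n := diff_subset_diff_left hH1
  refine measure_mono_null hsub ?_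
  rw [measure_diff ((iUnion_subset hKsub).trans hH1)
    ((MeasurableSet.iUnion hKmeas).nullMeasurableSet) (measure_ne_top _ _), hH3]
  exact tsub_eq_zero_of_le hμle




lemma prod_mono_left {Ω E : Type*} {m m' : MeasurableSpace Ω} (mE : MeasurableSpace E)
    (h : m ≤ m') : m.prod mE ≤ m'.prod mE :=
  sup_le_sup (MeasurableSpace.comap_mono h) le_rfl

lemma measurableSet_prod_of {Ω E : Type*} {m1 : MeasurableSpace Ω} {m2 : MeasurableSpace E}
    {A : Set Ω} {B : Set E} (hA : MeasurableSet[m1] A) (hB : MeasurableSet[m2] B) :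
    MeasurableSet[m1.prod m2] (A ×ˢ B) := by
  rw [Set.prod_eq]
  have h1 : MeasurableSet[m1.prod m2] (Prod.fst ⁻¹' A : Set (Ω × E)) :=
    (le_sup_left : m1.comap Prod.fst ≤ m1.prod m2) _ ⟨A, hA, rfl⟩
  have h2 : MeasurableSet[m1.prod m2] (Prod.snd ⁻¹' B : Set (Ω × E)) :=
    (le_sup_right : m2.comap Prod.snd ≤ m1.prod m2) _ ⟨B, hB, rfl⟩
  exact h1.inter h2

/-- Any set in a product σ-algebra factorizes through a marking map to `ℕ → Bool`
in the first coordinate. -/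
theorem exists_factor {Ω E : Type*} (mH : MeasurableSpace Ω) (mE : MeasurableSpace E)
    {S : Set (Ω × E)} (hS : MeasurableSet[mH.prod mE] S) :
    ∃ (m : Ω → (ℕ → Bool)) (S' : Set ((ℕ → Bool) × E)),
      (@Measurable Ω (ℕ → Bool) mH _ m) ∧
      MeasurableSet[(inferInstance : MeasurableSpace (ℕ → Bool)).prod mE] S' ∧
      (Prod.map m id) ⁻¹' S' = S := by
  classical
  have hA : ∃ g : ℕ → Set Ω, (∀ n, MeasurableSet[mH] (g n)) ∧
      MeasurableSet[(MeasurableSpace.generateFrom (Set.range g)).prod mE] S := by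
    let m' : MeasurableSpace (Ω × E) :=
      { MeasurableSet' := fun s => ∃ g : ℕ → Set Ω, (∀ n, MeasurableSet[mH] (g n)) ∧
          MeasurableSet[(MeasurableSpace.generateFrom (Set.range g)).prod mE] s
        measurableSet_empty := ⟨fun _ => ∅, fun _ => MeasurableSet.empty,
          @MeasurableSet.empty _
            ((MeasurableSpace.generateFrom (Set.range fun _ : ℕ => (∅ : Set Ω))).prod mE)⟩
        measurableSet_compl := fun s hs => by
          obtain ⟨g, hg, hmeas⟩ := hs
          exact ⟨g, hg, hmeas.compl⟩
        measurableSet_iUnion := fun s hs => by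
          choose g hg hmeas using hs
          refine ⟨fun k => g (Nat.unpair k).1 (Nat.unpair k).2, fun k => hg _ _, ?_⟩
          refine MeasurableSet.iUnion fun n => ?_
          have hle : MeasurableSpace.generateFrom (Set.range (g n)) ≤
              MeasurableSpace.generateFrom
                (Set.range fun k => g (Nat.unpair k).1 (Nat.unpair k).2) := by
            refine MeasurableSpace.generateFrom_le ?_
            rintro t ⟨i, rfl⟩
            exact MeasurableSpace.measurableSet_generateFrom ⟨Nat.pair n i, by simp⟩
          exact prod_mono_left mE hle _ (hmeas n) }
    have hle : mH.prod mE ≤ m' := by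
      refine sup_le ?_ ?_
      · rintro s ⟨A, hA, rfl⟩
        refine ⟨fun _ => A, fun _ => hA, ?_⟩
        exact (le_sup_left : (MeasurableSpace.generateFrom
            (Set.range fun _ : ℕ => A)).comap Prod.fst ≤ _) _
          ⟨A, MeasurableSpace.measurableSet_generateFrom ⟨0, rfl⟩, rfl⟩
      · rintro s ⟨B, hB, rfl⟩
        refine ⟨fun _ => ∅, fun _ => MeasurableSet.empty, ?_⟩
        have : Prod.snd ⁻¹' B = (univ : Set Ω) ×ˢ B := by
          ext p; simp
        rw [this]
        exact measurableSet_prod_of MeasurableSet.univ hB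
    exact hle S hS
  obtain ⟨g, hg, hSg⟩ := hA
  set m : Ω → ℕ → Bool := fun ω n => decide (ω ∈ g n) with hmdef
  have hm : @Measurable Ω (ℕ → Bool) mH _ m := by
    refine measurable_pi_lambda m fun n => ?_
    refine measurable_to_countable' fun b => ?_
    cases b
    · have h : (fun ω => m ω n) ⁻¹' {false} = (g n)ᶜ := by
        ext ω; simp [hmdef]
      rw [h]; exact (hg n).compl
    · have h : (fun ω => m ω n) ⁻¹' {true} = g n := by
        ext ω; simp [hmdef]
      rw [h]; exact hg n
  set mB : MeasurableSpace (ℕ → Bool) := inferInstance with hmB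
  have hgen : MeasurableSpace.generateFrom (Set.range g) ≤ MeasurableSpace.comap m mB := by
    refine MeasurableSpace.generateFrom_le ?_
    rintro t ⟨n, rfl⟩
    refine ⟨{x | x n = true}, ?_, ?_⟩
    · have hev : Measurable fun x : ℕ → Bool => x n := measurable_pi_apply n
      exact hev (measurableSet_singleton true)
    · ext ω; simp [hmdef]
  have hprodle : (MeasurableSpace.generateFrom (Set.range g)).prod mE ≤
      MeasurableSpace.comap (Prod.map m id) (mB.prod mE) := by
    refine sup_le ?_ ?_
    · calc (MeasurableSpace.generateFrom (Set.range g)).comap Prod.fst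
          ≤ (MeasurableSpace.comap m mB).comap Prod.fst :=
            MeasurableSpace.comap_mono hgen
        _ = (mB.comap Prod.fst).comap (Prod.map m id) := by
            rw [MeasurableSpace.comap_comp, MeasurableSpace.comap_comp]
            rfl
        _ ≤ MeasurableSpace.comap (Prod.map m id) (mB.prod mE) :=
            MeasurableSpace.comap_mono le_sup_left
    · calc mE.comap Prod.snd
          = (mE.comap Prod.snd).comap (Prod.map m id) := by
            rw [MeasurableSpace.comap_comp]
            rfl
        _ ≤ MeasurableSpace.comap (Prod.map m id) (mB.prod mE) :=
            MeasurableSpace.comap_mono le_sup_right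
  obtain ⟨S', hS', hpre⟩ := hprodle S hSg
  exact ⟨m, S', hm, hS', hpre⟩

/-- Largest (up to null sets) `mH`-measurable set almost surely contained
in an arbitrary set `B`. -/
theorem exists_core {Ω : Type*} {mF : MeasurableSpace Ω} (P : Measure Ω) [IsFiniteMeasure P]
    (mH : MeasurableSpace Ω) (hH : mH ≤ mF) (B : Set Ω) :
    ∃ A : Set Ω, MeasurableSet[mH] A ∧ P (A \ B) = 0 ∧
      ∀ A' : Set Ω, MeasurableSet[mH] A' → P (A' \ B) = 0 → P (A' \ A) = 0 := by
  let ι := {A : Set Ω // MeasurableSet[mH] A ∧ P (A \ B) = 0}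
  haveI : Nonempty ι := ⟨⟨∅, MeasurableSet.empty, by simp⟩⟩
  set s := ⨆ i : ι, P i.1 with hs
  have hstop : s ≠ ⊤ := by
    refine ne_of_lt (lt_of_le_of_lt (iSup_le fun i => measure_mono (subset_univ _)) ?_)
    exact (measure_lt_top P univ)
  have hseq : ∀ n : ℕ, ∃ i : ι, s ≤ P i.1 + ((n : ℝ≥0∞) + 1)⁻¹ := by
    intro n
    exact le_add_of_iSup hstop (ENNReal.inv_ne_zero.2 (by simp))
  choose i hi using hseq
  set A := ⋃ n, (i n).1 with hA
  have hAmeas : MeasurableSet[mH] A := MeasurableSet.iUnion fun n => (i n).2.1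
  have hAnull : P (A \ B) = 0 := by
    refine measure_mono_null ?_ (measure_iUnion_null fun n => (i n).2.2)
    rw [hA, iUnion_diff]
  have hPA : P A = s := by
    refine le_antisymm (le_iSup (fun j : ι => P j.1) ⟨A, hAmeas, hAnull⟩) ?_
    refine le_of_forall_nat_inv (measure_ne_top _ _) fun n => ?_
    exact (hi n).trans (add_le_add_left (measure_mono (subset_iUnion _ n)) _)
  refine ⟨A, hAmeas, hAnull, ?_⟩
  intro A' hA'meas hA'null
  have hU : P (A ∪ A') ≤ s := by
    refine le_iSup (fun j : ι => P j.1) ⟨A ∪ A', hAmeas.union hA'meas, ?_⟩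
    refine measure_mono_null ?_ (measure_union_null hAnull hA'null)
    rw [union_diff_distrib]
  have hsplit : P (A ∪ A') = P A + P (A' \ A) := by
    rw [← union_diff_self]
    exact measure_union disjoint_sdiff_right (hH _ (hA'meas.diff hAmeas))
  have hle2 : P A + P (A' \ A) ≤ P A + 0 := by
    rw [add_zero, ← hsplit]
    exact hU.trans_eq hPA.symm
  have := (ENNReal.add_le_add_iff_left (measure_ne_top P A)).1 hle2
  exact le_antisymm this zero_le


lemma dist_combo {X : Type*} [NormedAddCommGroup X] [NormedSpace ℝ X] {a b : ℝ}
    (ha : 0 ≤ a) (hb : 0 ≤ b) (x x' y y' : X) :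
    dist (a • x + b • y) (a • x' + b • y') ≤ a * dist x x' + b * dist y y' := by
  rw [dist_eq_norm, dist_eq_norm, dist_eq_norm]
  have h : a • x + b • y - (a • x' + b • y') = a • (x - x') + b • (y - y') := by
    rw [smul_sub, smul_sub]; abel
  rw [h]
  refine (norm_add_le _ _).trans ?_
  rw [norm_smul, norm_smul, Real.norm_eq_abs, Real.norm_eq_abs,
    abs_of_nonneg ha, abs_of_nonneg hb]

end Stmt12Aux

open Stmt12Aux in
/-- Lemma 4.3: existence of the conditional core m(X|H) of a random closed set X: the
largest H-measurable random closed set a.s. contained in X; it is a.s. convex (a cone)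
whenever X is. -/
theorem stmt12 {Ω X : Type*} (mH : MeasurableSpace Ω) [mF : MeasurableSpace Ω] [NormedAddCommGroup X]
    [NormedSpace ℝ X] [CompleteSpace X] [TopologicalSpace.SeparableSpace X]
    [MeasurableSpace X] [BorelSpace X]
    (P : Measure Ω) [IsProbabilityMeasure P] (hPc : P.IsComplete)
    (hH : mH ≤ mF)
    (C : Ω → Set X) (hCgr : MeasurableSet {p : Ω × X | p.2 ∈ C p.1})
    (hCcl : ∀ ω, IsClosed (C ω)) :
    ∃ Z : Ω → Set X, (∀ ω, IsClosed (Z ω)) ∧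
      MeasurableSet[mH.prod (inferInstance : MeasurableSpace X)]
        {p : Ω × X | p.2 ∈ Z p.1} ∧
      (∀ᵐ ω ∂P, Z ω ⊆ C ω) ∧
      (∀ W : Ω → Set X, (∀ ω, IsClosed (W ω)) →
        MeasurableSet[mH.prod (inferInstance : MeasurableSpace X)]
          {p : Ω × X | p.2 ∈ W p.1} →
        (∀ᵐ ω ∂P, W ω ⊆ C ω) → ∀ᵐ ω ∂P, W ω ⊆ Z ω) ∧
      ((∀ᵐ ω ∂P, Convex ℝ (C ω)) → ∀ᵐ ω ∂P, Convex ℝ (Z ω)) ∧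
      ((∀ᵐ ω ∂P, ∀ x ∈ C ω, ∀ c : ℝ, 0 ≤ c → c • x ∈ C ω) →
        ∀ᵐ ω ∂P, ∀ x ∈ Z ω, ∀ c : ℝ, 0 ≤ c → c • x ∈ Z ω) := by
  classical
  rcases isEmpty_or_nonempty X with hX | hX
  · refine ⟨fun _ => (∅ : Set X), fun _ => isClosed_empty, ?_, ?_, ?_, ?_, ?_⟩
    · have h : {p : Ω × X | p.2 ∈ (∅ : Set X)} = ∅ := by simp
      rw [h]
      exact @MeasurableSet.empty _ (mH.prod inferInstance)
    · exact Filter.Eventually.of_forall fun ω => empty_subset _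
    · intro W _ _ _
      refine Filter.Eventually.of_forall fun ω x hx => ?_
      exact (IsEmpty.false x).elim
    · intro _
      exact Filter.Eventually.of_forall fun ω => convex_empty
    · intro _
      refine Filter.Eventually.of_forall fun ω x hx => ?_
      exact (IsEmpty.false x).elim
  -- main case
  obtain ⟨u, hu⟩ := TopologicalSpace.exists_dense_seq X
  -- the reference events
  set Bset : ℕ → ℚ → Set Ω := fun n q => {ω | ∃ x ∈ C ω, dist x (u n) ≤ (q : ℝ)} with hBdef
  have hBmono : ∀ (n : ℕ) {q q' : ℚ}, q ≤ q' → Bset n q ⊆ Bset n q' := by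
    intro n q q' hqq' ω hω
    obtain ⟨x, hx1, hx2⟩ := hω
    exact ⟨x, hx1, hx2.trans (by exact_mod_cast hqq')⟩
  -- conditional cores of the reference events
  have hcore := fun (n : ℕ) (q : ℚ) => exists_core P mH hH (Bset n q)
  choose A0 hA0meas hA0null hA0max using hcore
  -- regularized versions
  set A : ℕ → ℚ → Set Ω := fun n q => ⋃ q' : {r : ℚ // 0 < r ∧ r ≤ q}, A0 n q'.1 with hAdef
  have hAmeas : ∀ n q, MeasurableSet[mH] (A n q) := fun n q =>
    MeasurableSet.iUnion fun q' => hA0meas n q'.1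
  have hAmem : ∀ {n : ℕ} {q : ℚ} {ω : Ω}, ω ∈ A n q ↔
      ∃ q' : ℚ, 0 < q' ∧ q' ≤ q ∧ ω ∈ A0 n q' := by
    intro n q ω
    simp only [hAdef, mem_iUnion, Subtype.exists, exists_prop]
    constructor
    · rintro ⟨q', ⟨h1, h2⟩, h3⟩; exact ⟨q', h1, h2, h3⟩
    · rintro ⟨q', h1, h2, h3⟩; exact ⟨q', ⟨h1, h2⟩, h3⟩
  have hA0toA : ∀ {n : ℕ} {q' q : ℚ} {ω : Ω}, 0 < q' → q' ≤ q → ω ∈ A0 n q' → ω ∈ A n q :=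
    fun h1 h2 h3 => hAmem.2 ⟨_, h1, h2, h3⟩
  have hAmono : ∀ (n : ℕ) {q q' : ℚ}, q ≤ q' → A n q ⊆ A n q' := by
    intro n q q' hqq' ω hω
    obtain ⟨r, h1, h2, h3⟩ := hAmem.1 hω
    exact hA0toA h1 (h2.trans hqq') h3
  -- the candidate conditional core
  set Z : Ω → Set X := fun ω =>
    {x | ∀ q : ℚ, 0 < q → ∃ n, ω ∈ A n q ∧ dist x (u n) ≤ (q : ℝ)} with hZdef
  -- closedness
  have hZcl : ∀ ω, IsClosed (Z ω) := by
    intro ω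
    refine isClosed_of_closure_subset ?_
    intro x hx q hq
    have hq2 : (0 : ℝ) < (q : ℝ) / 2 := by positivity
    obtain ⟨y, hy, hxy⟩ := Metric.mem_closure_iff.1 hx ((q : ℝ) / 2) hq2
    obtain ⟨n, hA1, hd1⟩ := hy (q / 2) (by positivity)
    refine ⟨n, hAmono n (by linarith) hA1, ?_⟩
    have : ((q / 2 : ℚ) : ℝ) = (q : ℝ) / 2 := by push_cast; ring
    calc dist x (u n) ≤ dist x y + dist y (u n) := dist_triangle _ _ _
      _ ≤ (q : ℝ) / 2 + (q : ℝ) / 2 := by rw [this] at hd1; exact add_le_add hxy.le hd1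
      _ = (q : ℝ) := by ring
  -- graph measurability
  have hZgr : MeasurableSet[mH.prod (inferInstance : MeasurableSpace X)]
      {p : Ω × X | p.2 ∈ Z p.1} := by
    have h : {p : Ω × X | p.2 ∈ Z p.1} =
        ⋂ q : {q : ℚ // 0 < q}, ⋃ n, (A n q.1 ×ˢ Metric.closedBall (u n) (q.1 : ℝ)) := by
      ext ⟨ω, x⟩
      simp only [mem_setOf_eq, mem_iInter, mem_iUnion, Set.mem_prod,
        Metric.mem_closedBall, Subtype.forall, hZdef]
    rw [h]
    refine MeasurableSet.iInter fun q => MeasurableSet.iUnion fun n => ?_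
    exact measurableSet_prod_of (hAmeas n q.1) measurableSet_closedBall
  -- a.s. containment in C
  have hgood : ∀ᵐ ω ∂P, ∀ (n : ℕ) (q : ℚ), ω ∈ A0 n q → ω ∈ Bset n q := by
    rw [ae_all_iff]
    intro n
    rw [ae_all_iff]
    intro q
    rw [ae_iff]
    refine measure_mono_null (fun ω hω => ?_) (hA0null n q)
    simp only [mem_setOf_eq] at hω
    push_neg at hω
    exact hω
  have hZC : ∀ᵐ ω ∂P, Z ω ⊆ C ω := by
    filter_upwards [hgood] with ω hω x hx
    rw [← (hCcl ω).closure_eq]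
    rw [Metric.mem_closure_iff]
    intro ε hε
    obtain ⟨q, hq0, hqε⟩ := exists_rat_btwn (show (0 : ℝ) < ε / 2 by positivity)
    have hq0' : 0 < q := by exact_mod_cast hq0
    obtain ⟨n, hA1, hd1⟩ := hx q hq0'
    obtain ⟨q', h1, h2, h3⟩ := hAmem.1 hA1
    obtain ⟨c, hc1, hc2⟩ := hω n q' h3
    refine ⟨c, hc1, ?_⟩
    have h2' : (q' : ℝ) ≤ (q : ℝ) := by exact_mod_cast h2
    calc dist x c ≤ dist x (u n) + dist (u n) c := dist_triangle _ _ _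
      _ ≤ (q : ℝ) + (q' : ℝ) := add_le_add hd1 (by rw [dist_comm]; exact hc2)
      _ < ε := by linarith
  refine ⟨Z, hZcl, hZgr, hZC, ?_, ?_, ?_⟩
  · -- maximality
    intro W hWcl hWgr hWC
    obtain ⟨m, S', hm, hS', hpre⟩ := exists_factor mH (inferInstance : MeasurableSpace X) hWgr
    have hmF : @Measurable Ω (ℕ → Bool) mF inferInstance m := fun s hs => hH _ (hm hs)
    set ν : Measure (ℕ → Bool) := @Measure.map Ω (ℕ → Bool) mF inferInstance m P with hνdef
    haveI : IsFiniteMeasure ν := by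
      constructor
      rw [hνdef, Measure.map_apply hmF MeasurableSet.univ]
      exact measure_lt_top P _
    have hWiff : ∀ (ω : Ω) (x : X), x ∈ W ω ↔ (m ω, x) ∈ S' := by
      intro ω x
      have := Set.ext_iff.1 hpre (ω, x)
      exact this.symm
    have key : ∀ (n : ℕ) (q : ℚ),
        P ({ω | ∃ x, x ∈ W ω ∧ dist x (u n) ≤ (q : ℝ)} \ A0 n q) = 0 := by
      intro n q
      set T : Set (ℕ → Bool) :=
        Prod.fst '' (S' ∩ Prod.snd ⁻¹' Metric.closedBall (u n) (q : ℝ)) with hTdef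
      have hTan : MeasureTheory.AnalyticSet T := by
        refine MeasurableSet.analyticSet_image ?_ measurable_fst
        exact (show MeasurableSet S' from hS').inter
          (measurable_snd measurableSet_closedBall)
      obtain ⟨Sb, hSbm, hSbT, hSbnull⟩ := analytic_exists_measurable_subset ν hTan
      set A' := m ⁻¹' Sb with hA'def
      have hA'meas : MeasurableSet[mH] A' := hm hSbm
      have hE : {ω | ∃ x, x ∈ W ω ∧ dist x (u n) ≤ (q : ℝ)} = m ⁻¹' T := by
        ext ω
        constructor
        · rintro ⟨x, hxW, hxd⟩
          exact ⟨(m ω, x), ⟨(hWiff ω x).1 hxW, by simpa using hxd⟩, rfl⟩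
        · rintro ⟨p, ⟨hp1, hp2⟩, hp3⟩
          refine ⟨p.2, (hWiff ω p.2).2 ?_, by simpa using hp2⟩
          rw [show (m ω, p.2) = p from Prod.ext hp3.symm rfl]
          exact hp1
      have hEA' : P ({ω | ∃ x, x ∈ W ω ∧ dist x (u n) ≤ (q : ℝ)} \ A') = 0 := by
        rw [hE, hA'def, ← preimage_diff]
        obtain ⟨N, hN1, hN2, hN3⟩ := exists_measurable_superset ν (T \ Sb)
        refine measure_mono_null (preimage_mono hN1) ?_
        have hmap : ν N = P (m ⁻¹' N) := by
          rw [hνdef]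
          exact Measure.map_apply hmF hN2
        rw [← hmap, hN3, hSbnull]
      have hA'B : P (A' \ Bset n q) = 0 := by
        refine measure_mono_null (fun ω hω => ?_) (ae_iff.1 hWC)
        simp only [mem_setOf_eq]
        intro hcon
        obtain ⟨h1, h2⟩ := hω
        have hωE : ω ∈ {ω | ∃ x, x ∈ W ω ∧ dist x (u n) ≤ (q : ℝ)} := by
          rw [hE]
          exact hSbT h1
        obtain ⟨x, hxW, hxd⟩ := hωE
        exact h2 ⟨x, hcon hxW, hxd⟩
      have hfin := hA0max n q A' hA'meas hA'B
      refine measure_mono_null (fun ω hω => ?_)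
        (measure_union_null hEA' hfin)
      obtain ⟨h1, h2⟩ := hω
      by_cases h3 : ω ∈ A'
      · exact Or.inr ⟨h3, h2⟩
      · exact Or.inl ⟨h1, h3⟩
    have hkey' : ∀ᵐ ω ∂P, ∀ (n : ℕ) (q : ℚ),
        (∃ x, x ∈ W ω ∧ dist x (u n) ≤ (q : ℝ)) → ω ∈ A0 n q := by
      rw [ae_all_iff]
      intro n
      rw [ae_all_iff]
      intro q
      rw [ae_iff]
      refine measure_mono_null (fun ω hω => ?_) (key n q)
      simp only [mem_setOf_eq] at hω
      push_neg at hω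
      exact ⟨hω.1, hω.2⟩
    filter_upwards [hkey'] with ω hω x hxW
    intro q hq
    obtain ⟨n, hn⟩ := hu.exists_dist_lt x (show (0 : ℝ) < (q : ℝ) by exact_mod_cast hq)
    have hA0 : ω ∈ A0 n q := hω n q ⟨x, hxW, hn.le⟩
    exact ⟨n, hA0toA hq le_rfl hA0, hn.le⟩
  · -- convexity
    intro hconv
    have hkey : ∀ᵐ ω ∂P, ∀ (n₁ n₂ n₃ : ℕ) (q₁ q₂ r t : ℚ),
        0 ≤ t → t ≤ 1 →
        dist ((t : ℝ) • u n₁ + (1 - (t : ℝ)) • u n₂) (u n₃) + max (q₁ : ℝ) (q₂ : ℝ) ≤ (r : ℝ) →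
        ω ∈ A0 n₁ q₁ → ω ∈ A0 n₂ q₂ → ω ∈ A0 n₃ r := by
      rw [ae_all_iff]; intro n₁
      rw [ae_all_iff]; intro n₂
      rw [ae_all_iff]; intro n₃
      rw [ae_all_iff]; intro q₁
      rw [ae_all_iff]; intro q₂
      rw [ae_all_iff]; intro r
      rw [ae_all_iff]; intro t
      by_cases hcond : 0 ≤ t ∧ t ≤ 1 ∧
          dist ((t : ℝ) • u n₁ + (1 - (t : ℝ)) • u n₂) (u n₃) + max (q₁ : ℝ) (q₂ : ℝ) ≤ (r : ℝ)
      swap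
      · refine Filter.Eventually.of_forall fun ω h1 h2 h3 _ _ => ?_
        exact absurd ⟨h1, h2, h3⟩ hcond
      obtain ⟨ht0, ht1, hd⟩ := hcond
      have hnull : P ((A0 n₁ q₁ ∩ A0 n₂ q₂) \ Bset n₃ r) = 0 := by
        have hsub : (A0 n₁ q₁ ∩ A0 n₂ q₂) \ Bset n₃ r ⊆
            ((A0 n₁ q₁ \ Bset n₁ q₁) ∪ (A0 n₂ q₂ \ Bset n₂ q₂)) ∪
              {ω | ¬ Convex ℝ (C ω)} := by
          rintro ω ⟨⟨hω1, hω2⟩, hω3⟩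
          by_cases h1 : ω ∈ Bset n₁ q₁
          swap
          · exact Or.inl (Or.inl ⟨hω1, h1⟩)
          by_cases h2 : ω ∈ Bset n₂ q₂
          swap
          · exact Or.inl (Or.inr ⟨hω2, h2⟩)
          by_cases h3 : Convex ℝ (C ω)
          swap
          · exact Or.inr h3
          exfalso
          apply hω3
          obtain ⟨c₁, hc₁, hd₁⟩ := h1
          obtain ⟨c₂, hc₂, hd₂⟩ := h2
          have ht0' : (0 : ℝ) ≤ (t : ℝ) := by exact_mod_cast ht0
          have ht1' : (t : ℝ) ≤ 1 := by exact_mod_cast ht1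
          refine ⟨(t : ℝ) • c₁ + (1 - (t : ℝ)) • c₂,
            h3 hc₁ hc₂ ht0' (by linarith) (by ring), ?_⟩
          have hcomb : dist ((t : ℝ) • c₁ + (1 - (t : ℝ)) • c₂)
              ((t : ℝ) • u n₁ + (1 - (t : ℝ)) • u n₂) ≤
              (t : ℝ) * dist c₁ (u n₁) + (1 - (t : ℝ)) * dist c₂ (u n₂) :=
            dist_combo ht0' (by linarith) _ _ _ _
          have hmax : (t : ℝ) * dist c₁ (u n₁) + (1 - (t : ℝ)) * dist c₂ (u n₂) ≤
              max (q₁ : ℝ) (q₂ : ℝ) := by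
            have hm1 : (q₁ : ℝ) ≤ max (q₁ : ℝ) (q₂ : ℝ) := le_max_left _ _
            have hm2 : (q₂ : ℝ) ≤ max (q₁ : ℝ) (q₂ : ℝ) := le_max_right _ _
            have e1 : (t : ℝ) * dist c₁ (u n₁) ≤ (t : ℝ) * max (q₁ : ℝ) (q₂ : ℝ) :=
              mul_le_mul_of_nonneg_left (hd₁.trans hm1) ht0'
            have e2 : (1 - (t : ℝ)) * dist c₂ (u n₂) ≤
                (1 - (t : ℝ)) * max (q₁ : ℝ) (q₂ : ℝ) :=
              mul_le_mul_of_nonneg_left (hd₂.trans hm2) (by linarith)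
            have hsum : (t : ℝ) * max (q₁ : ℝ) (q₂ : ℝ) +
                (1 - (t : ℝ)) * max (q₁ : ℝ) (q₂ : ℝ) = max (q₁ : ℝ) (q₂ : ℝ) := by ring
            linarith [add_le_add e1 e2]
          have htri := dist_triangle ((t : ℝ) • c₁ + (1 - (t : ℝ)) • c₂)
            ((t : ℝ) • u n₁ + (1 - (t : ℝ)) • u n₂) (u n₃)
          have hcm := hcomb.trans hmax
          linarith
        refine measure_mono_null hsub ?_
        refine measure_union_null (measure_union_null (hA0null n₁ q₁) (hA0null n₂ q₂)) ?_
        exact ae_iff.1 hconv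
      have hfin := hA0max n₃ r _ ((hA0meas n₁ q₁).inter (hA0meas n₂ q₂)) hnull
      rw [ae_iff]
      refine measure_mono_null (fun ω hω => ?_) hfin
      simp only [mem_setOf_eq] at hω
      push_neg at hω
      obtain ⟨h1, h2, h3, h4, h5, h6⟩ := hω
      exact ⟨⟨h4, h5⟩, h6⟩
    filter_upwards [hkey] with ω hω
    have hstep : ∀ x ∈ Z ω, ∀ y ∈ Z ω, ∀ t : ℚ, 0 ≤ t → t ≤ 1 →
        ((t : ℝ) • x + (1 - (t : ℝ)) • y) ∈ Z ω := by
      intro x hx y hy t ht0 ht1 q hq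
      have hq4 : 0 < q / 4 := by positivity
      obtain ⟨n₁, hA1, hd1⟩ := hx (q / 4) hq4
      obtain ⟨q₁, hq₁0, hq₁le, hA01⟩ := hAmem.1 hA1
      obtain ⟨n₂, hA2, hd2⟩ := hy (q / 4) hq4
      obtain ⟨q₂, hq₂0, hq₂le, hA02⟩ := hAmem.1 hA2
      have ht0' : (0 : ℝ) ≤ (t : ℝ) := by exact_mod_cast ht0
      have ht1' : (t : ℝ) ≤ 1 := by exact_mod_cast ht1
      obtain ⟨n₃, hn₃⟩ := hu.exists_dist_lt
        ((t : ℝ) • u n₁ + (1 - (t : ℝ)) • u n₂) (show (0 : ℝ) < (q : ℝ) / 4 by positivity)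
      have hq₁le' : (q₁ : ℝ) ≤ (q : ℝ) / 4 := by
        have : (q₁ : ℝ) ≤ ((q / 4 : ℚ) : ℝ) := by exact_mod_cast hq₁le
        rwa [show ((q / 4 : ℚ) : ℝ) = (q : ℝ) / 4 by push_cast; ring] at this
      have hq₂le' : (q₂ : ℝ) ≤ (q : ℝ) / 4 := by
        have : (q₂ : ℝ) ≤ ((q / 4 : ℚ) : ℝ) := by exact_mod_cast hq₂le
        rwa [show ((q / 4 : ℚ) : ℝ) = (q : ℝ) / 4 by push_cast; ring] at this
      have hcond : dist ((t : ℝ) • u n₁ + (1 - (t : ℝ)) • u n₂) (u n₃) +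
          max (q₁ : ℝ) (q₂ : ℝ) ≤ ((q / 2 : ℚ) : ℝ) := by
        have hmx : max (q₁ : ℝ) (q₂ : ℝ) ≤ (q : ℝ) / 4 := max_le hq₁le' hq₂le'
        rw [show ((q / 2 : ℚ) : ℝ) = (q : ℝ) / 2 by push_cast; ring]
        linarith
      have hA03 := hω n₁ n₂ n₃ q₁ q₂ (q / 2) t ht0 ht1 hcond hA01 hA02
      refine ⟨n₃, hA0toA (by positivity) (by linarith) hA03, ?_⟩
      have hzd : dist ((t : ℝ) • x + (1 - (t : ℝ)) • y)
          ((t : ℝ) • u n₁ + (1 - (t : ℝ)) • u n₂) ≤ (q : ℝ) / 4 := by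
        have h1 := dist_combo ht0' (by linarith : (0:ℝ) ≤ 1 - (t:ℝ)) x (u n₁) y (u n₂)
        have hd1' : dist x (u n₁) ≤ (q : ℝ) / 4 := by
          have : ((q / 4 : ℚ) : ℝ) = (q : ℝ) / 4 := by push_cast; ring
          rwa [this] at hd1
        have hd2' : dist y (u n₂) ≤ (q : ℝ) / 4 := by
          have : ((q / 4 : ℚ) : ℝ) = (q : ℝ) / 4 := by push_cast; ring
          rwa [this] at hd2
        have e1 : (t : ℝ) * dist x (u n₁) ≤ (t : ℝ) * ((q : ℝ) / 4) :=
          mul_le_mul_of_nonneg_left hd1' ht0'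
        have e2 : (1 - (t : ℝ)) * dist y (u n₂) ≤ (1 - (t : ℝ)) * ((q : ℝ) / 4) :=
          mul_le_mul_of_nonneg_left hd2' (by linarith)
        have hsum : (t : ℝ) * ((q : ℝ) / 4) + (1 - (t : ℝ)) * ((q : ℝ) / 4) =
            (q : ℝ) / 4 := by ring
        linarith [add_le_add e1 e2, h1]
      have htri := dist_triangle ((t : ℝ) • x + (1 - (t : ℝ)) • y)
        ((t : ℝ) • u n₁ + (1 - (t : ℝ)) • u n₂) (u n₃)
      have hqR : (0 : ℝ) < (q : ℝ) := by exact_mod_cast hq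
      linarith
    intro x hx y hy a b ha hb hab
    have hb' : b = 1 - a := by linarith
    subst hb'
    have ha1 : a ≤ 1 := by linarith
    have hcl := (hZcl ω).closure_eq
    rw [← hcl]
    rw [Metric.mem_closure_iff]
    intro ε hε
    by_cases hxy : x = y
    · subst hxy
      have hsum : a • x + (1 - a) • x = x := by
        rw [← add_smul]
        norm_num
      refine ⟨x, hx, ?_⟩
      rw [hsum, dist_self]
      exact hε
    · have hxy' : (0 : ℝ) < ‖x - y‖ := by
        rw [norm_pos_iff]
        exact sub_ne_zero.2 hxy
      set δ := ε / ‖x - y‖ with hδdef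
      have hδ0 : 0 < δ := by positivity
      have hT : ∃ t : ℚ, 0 ≤ t ∧ t ≤ 1 ∧ |a - (t : ℝ)| < δ := by
        by_cases haz : a = 0
        · exact ⟨0, le_rfl, zero_le_one, by simp [haz]; exact hδ0⟩
        · have ha0 : 0 < a := lt_of_le_of_ne ha (Ne.symm haz)
          have hδ'0 : 0 < min δ a := lt_min hδ0 ha0
          obtain ⟨t, ht1, ht2⟩ := exists_rat_btwn (show a - min δ a < a by linarith)
          have htnn : (0 : ℝ) ≤ (t : ℝ) := by
            have : a - min δ a ≥ 0 := by
              have := min_le_right δ a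
              linarith
            linarith
          refine ⟨t, by exact_mod_cast htnn, ?_, ?_⟩
          · have : (t : ℝ) ≤ 1 := le_of_lt (lt_of_lt_of_le ht2 ha1)
            exact_mod_cast this
          · rw [abs_of_pos (by linarith)]
            have := min_le_left δ a
            linarith
      obtain ⟨t, ht0, ht1, htδ⟩ := hT
      refine ⟨(t : ℝ) • x + (1 - (t : ℝ)) • y, hstep x hx y hy t ht0 ht1, ?_⟩
      have hdiff : (a • x + (1 - a) • y) - ((t : ℝ) • x + (1 - (t : ℝ)) • y) =
          (a - (t : ℝ)) • (x - y) := by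
        module
      rw [dist_eq_norm, hdiff, norm_smul, Real.norm_eq_abs]
      calc |a - (t : ℝ)| * ‖x - y‖ < δ * ‖x - y‖ :=
          mul_lt_mul_of_pos_right htδ hxy'
        _ = ε := by
          rw [hδdef]
          field_simp
  · -- cone
    intro hcone
    have hkey : ∀ᵐ ω ∂P, ∀ (n₁ n₃ : ℕ) (q₁ r s : ℚ),
        0 ≤ s →
        dist ((s : ℝ) • u n₁) (u n₃) + (s : ℝ) * (q₁ : ℝ) ≤ (r : ℝ) →
        ω ∈ A0 n₁ q₁ → ω ∈ A0 n₃ r := by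
      rw [ae_all_iff]; intro n₁
      rw [ae_all_iff]; intro n₃
      rw [ae_all_iff]; intro q₁
      rw [ae_all_iff]; intro r
      rw [ae_all_iff]; intro s
      by_cases hcond : 0 ≤ s ∧ dist ((s : ℝ) • u n₁) (u n₃) + (s : ℝ) * (q₁ : ℝ) ≤ (r : ℝ)
      swap
      · refine Filter.Eventually.of_forall fun ω h1 h2 _ => ?_
        exact absurd ⟨h1, h2⟩ hcond
      obtain ⟨hs0, hd⟩ := hcond
      have hs0' : (0 : ℝ) ≤ (s : ℝ) := by exact_mod_cast hs0
      have hnull : P (A0 n₁ q₁ \ Bset n₃ r) = 0 := by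
        have hsub : A0 n₁ q₁ \ Bset n₃ r ⊆
            (A0 n₁ q₁ \ Bset n₁ q₁) ∪
              {ω | ¬ ∀ x ∈ C ω, ∀ c : ℝ, 0 ≤ c → c • x ∈ C ω} := by
          rintro ω ⟨hω1, hω3⟩
          by_cases h1 : ω ∈ Bset n₁ q₁
          swap
          · exact Or.inl ⟨hω1, h1⟩
          by_cases h3 : ∀ x ∈ C ω, ∀ c : ℝ, 0 ≤ c → c • x ∈ C ω
          swap
          · exact Or.inr h3
          exfalso
          apply hω3
          obtain ⟨c₁, hc₁, hd₁⟩ := h1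
          refine ⟨(s : ℝ) • c₁, h3 c₁ hc₁ (s : ℝ) hs0', ?_⟩
          have hsm : dist ((s : ℝ) • c₁) ((s : ℝ) • u n₁) = |(s : ℝ)| * dist c₁ (u n₁) :=
            dist_smul₀ _ _ _
          rw [abs_of_nonneg hs0'] at hsm
          have htri := dist_triangle ((s : ℝ) • c₁) ((s : ℝ) • u n₁) (u n₃)
          have h4 : dist ((s : ℝ) • c₁) ((s : ℝ) • u n₁) ≤ (s : ℝ) * (q₁ : ℝ) := by
            rw [hsm]
            exact mul_le_mul_of_nonneg_left hd₁ hs0'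
          linarith
        refine measure_mono_null hsub ?_
        refine measure_union_null (hA0null n₁ q₁) ?_
        exact ae_iff.1 hcone
      have hfin := hA0max n₃ r _ (hA0meas n₁ q₁) hnull
      rw [ae_iff]
      refine measure_mono_null (fun ω hω => ?_) hfin
      simp only [mem_setOf_eq] at hω
      push_neg at hω
      obtain ⟨h1, h2, h3, h4⟩ := hω
      exact ⟨h3, h4⟩
    filter_upwards [hkey] with ω hω
    have hstep : ∀ x ∈ Z ω, ∀ s : ℚ, 0 ≤ s → (s : ℝ) • x ∈ Z ω := by
      intro x hx s hs0 q hq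
      have hs1 : (0 : ℚ) < s + 1 := by linarith
      have hq' : 0 < q / (2 * (s + 1)) := by positivity
      obtain ⟨n₁, hA1, hd1⟩ := hx (q / (2 * (s + 1))) hq'
      obtain ⟨q₁, hq₁0, hq₁le, hA01⟩ := hAmem.1 hA1
      obtain ⟨n₃, hn₃⟩ := hu.exists_dist_lt ((s : ℝ) • u n₁)
        (show (0 : ℝ) < (q : ℝ) / 4 by positivity)
      have hs0' : (0 : ℝ) ≤ (s : ℝ) := by exact_mod_cast hs0
      have hcond : dist ((s : ℝ) • u n₁) (u n₃) + (s : ℝ) * (q₁ : ℝ) ≤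
          ((q / 4 + s * q₁ : ℚ) : ℝ) := by
        push_cast
        linarith
      have hA03 := hω n₁ n₃ q₁ (q / 4 + s * q₁) s hs0 hcond hA01
      have hsq0 : s * (q / (2 * (s + 1))) ≤ q / 2 := by
        have hne : s + 1 ≠ 0 := ne_of_gt hs1
        have e : s * (q / (2 * (s + 1))) = q * (s / (s + 1)) / 2 := by
          field_simp
        rw [e]
        have hle1 : s / (s + 1) ≤ 1 := by
          rw [div_le_one hs1]
          linarith
        have h3 : q * (s / (s + 1)) ≤ q * 1 := mul_le_mul_of_nonneg_left hle1 hq.le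
        linarith
      have hsq₁ : s * q₁ ≤ q / 2 := by
        have h1 : s * q₁ ≤ s * (q / (2 * (s + 1))) :=
          mul_le_mul_of_nonneg_left hq₁le hs0
        linarith
      have hr0 : 0 < q / 4 + s * q₁ := by
        have : 0 ≤ s * q₁ := mul_nonneg hs0 hq₁0.le
        positivity
      have hrq : q / 4 + s * q₁ ≤ q := by linarith
      refine ⟨n₃, hA0toA hr0 hrq hA03, ?_⟩
      have hsm : dist ((s : ℝ) • x) ((s : ℝ) • u n₁) = |(s : ℝ)| * dist x (u n₁) :=
        dist_smul₀ _ _ _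
      rw [abs_of_nonneg hs0'] at hsm
      have hd1' : dist x (u n₁) ≤ ((q / (2 * (s + 1)) : ℚ) : ℝ) := hd1
      have hsq₁' : (s : ℝ) * dist x (u n₁) ≤ (q : ℝ) / 2 := by
        have h1 : (s : ℝ) * dist x (u n₁) ≤ (s : ℝ) * ((q / (2 * (s + 1)) : ℚ) : ℝ) :=
          mul_le_mul_of_nonneg_left hd1' hs0'
        have hc : ((s * (q / (2 * (s + 1))) : ℚ) : ℝ) ≤ ((q / 2 : ℚ) : ℝ) := by
          exact_mod_cast hsq0
        push_cast at h1 hc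
        linarith
      have htri := dist_triangle ((s : ℝ) • x) ((s : ℝ) • u n₁) (u n₃)
      have h5 : dist ((s : ℝ) • x) ((s : ℝ) • u n₁) ≤ (q : ℝ) / 2 := by
        rw [hsm]
        exact hsq₁'
      have hqR : (0 : ℝ) < (q : ℝ) := by exact_mod_cast hq
      linarith
    intro x hx c hc
    have hcl := (hZcl ω).closure_eq
    rw [← hcl, Metric.mem_closure_iff]
    intro ε hε
    set δ := ε / (‖x‖ + 1) with hδdef
    have hδ0 : 0 < δ := by positivity
    obtain ⟨s, hs1, hs2⟩ := exists_rat_btwn (show c < c + δ by linarith)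
    have hs0 : (0 : ℚ) ≤ s := by
      have : (0 : ℝ) ≤ (s : ℝ) := le_of_lt (lt_of_le_of_lt hc hs1)
      exact_mod_cast this
    refine ⟨(s : ℝ) • x, hstep x hx s hs0, ?_⟩
    have hdiff : c • x - (s : ℝ) • x = (c - (s : ℝ)) • x := by rw [sub_smul]
    rw [dist_eq_norm, hdiff, norm_smul, Real.norm_eq_abs]
    have habs : |c - (s : ℝ)| ≤ δ := by
      rw [abs_of_nonpos (by linarith)]
      linarith
    calc |c - (s : ℝ)| * ‖x‖ ≤ δ * ‖x‖ :=
        mul_le_mul_of_nonneg_right habs (norm_nonneg x)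
      _ < δ * (‖x‖ + 1) := by
        have := norm_nonneg x
        nlinarith
      _ = ε := by
        rw [hδdef]
        field_simp
end

section
/- Let X be a set-valued map whose conditional core m(X|H) exists and is a.s. nonempty. Then the set of H-measurable selections of X coincides with the set of H-measurable selections of m(X|H). -/
open MeasureTheory

/-- Lemma 4.2: if the conditional core m(X|H) exists and is a.s. nonempty, then the
H-measurable selections of X coincide with the H-measurable selections of m(X|H). -/
theorem stmt13 {Ω X : Type*} [mF : MeasurableSpace Ω] [NormedAddCommGroup X]
    [NormedSpace ℝ X] [CompleteSpace X] [TopologicalSpace.SeparableSpace X]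
    [MeasurableSpace X] [BorelSpace X]
    (P : Measure Ω) [IsProbabilityMeasure P] (hPc : P.IsComplete)
    (mH : MeasurableSpace Ω) (hH : mH ≤ mF)
    (C Z : Ω → Set X)
    (hZgr : MeasurableSet[mH.prod (inferInstance : MeasurableSpace X)]
      {p : Ω × X | p.2 ∈ Z p.1})
    (hZsub : ∀ᵐ ω ∂P, Z ω ⊆ C ω)
    (hZmax : ∀ W : Ω → Set X,
      MeasurableSet[mH.prod (inferInstance : MeasurableSpace X)]
        {p : Ω × X | p.2 ∈ W p.1} →
      (∀ᵐ ω ∂P, W ω ⊆ C ω) → ∀ᵐ ω ∂P, W ω ⊆ Z ω)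
    (hZne : ∀ᵐ ω ∂P, (Z ω).Nonempty) :
    {ξ : Ω → X | Measurable[mH] ξ ∧ ∀ᵐ ω ∂P, ξ ω ∈ C ω} =
      {ξ : Ω → X | Measurable[mH] ξ ∧ ∀ᵐ ω ∂P, ξ ω ∈ Z ω} := by
  ext ξ
  simp only [Set.mem_setOf_eq]
  constructor
  · rintro ⟨hmeas, hC⟩
    refine ⟨hmeas, ?_⟩
    have hgr : MeasurableSet[mH.prod (inferInstance : MeasurableSpace X)]
        {p : Ω × X | p.2 ∈ ({ξ p.1} : Set X)} := by
      have hf : Measurable[mH.prod (inferInstance : MeasurableSpace X)]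
          (fun p : Ω × X => ξ p.1) := hmeas.comp measurable_fst
      have hg : Measurable[mH.prod (inferInstance : MeasurableSpace X)]
          (fun p : Ω × X => p.2) := measurable_snd
      simpa [Set.mem_singleton_iff, eq_comm] using measurableSet_eq_fun hg hf
    have := hZmax (fun ω => {ξ ω}) hgr (by filter_upwards [hC] with ω h x hx; rwa [Set.mem_singleton_iff.mp hx])
    filter_upwards [this] with ω h using h rfl
  · rintro ⟨hmeas, hZ⟩
    exact ⟨hmeas, by filter_upwards [hZ, hZsub] with ω h1 h2 using h2 h1⟩
end

section
/- Let ξ be a random element of a separable Banach space with E(‖ξ‖ | H) < ∞ almost surely for a sub-σ-algebra H. Then ξ = γ ξ̃ where γ is an H-measurable random variable with values in [1,∞) and ξ̃ is Bochner integrable. Conversely, any ξ of this form satisfies E(‖ξ‖|H) < ∞ a.s.; equivalently, there exists a countable H-measurable partition {A_i} of Ω such that ξ 1_{A_i} is integrable for every i. -/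
open MeasureTheory
open scoped ENNReal

lemma aux_lintegral_mul {Ω : Type*} [mF : MeasurableSpace Ω]
    (P : Measure Ω) (mH : MeasurableSpace Ω) (hH : mH ≤ mF)
    (f g : Ω → ℝ≥0∞) (hf : Measurable[mF] f) (hg : Measurable[mF] g)
    (h : ∀ A : Set Ω, MeasurableSet[mH] A → ∫⁻ ω in A, f ω ∂P = ∫⁻ ω in A, g ω ∂P)
    (φ : Ω → ℝ≥0∞) (hφ : Measurable[mH] φ) :
    ∫⁻ ω, φ ω * f ω ∂P = ∫⁻ ω, φ ω * g ω ∂P := by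
  have htrim : (P.withDensity f).trim hH = (P.withDensity g).trim hH := by
    refine Measure.ext fun s hs => ?_
    rw [trim_measurableSet_eq hH hs, trim_measurableSet_eq hH hs,
      withDensity_apply _ (hH s hs), withDensity_apply _ (hH s hs)]
    exact h s hs
  have hφ' : Measurable[mF] φ := hφ.mono hH le_rfl
  calc ∫⁻ ω, φ ω * f ω ∂P = ∫⁻ ω, φ ω ∂(P.withDensity f) := by
        rw [lintegral_withDensity_eq_lintegral_mul (μ := P) hf hφ']
        simp only [Pi.mul_apply, mul_comm]
    _ = ∫⁻ ω, φ ω ∂((P.withDensity f).trim hH) := (lintegral_trim hH hφ).symm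
    _ = ∫⁻ ω, φ ω ∂((P.withDensity g).trim hH) := by rw [htrim]
    _ = ∫⁻ ω, φ ω ∂(P.withDensity g) := lintegral_trim hH hφ
    _ = ∫⁻ ω, φ ω * g ω ∂P := by
        rw [lintegral_withDensity_eq_lintegral_mul (μ := P) hg hφ']
        simp only [Pi.mul_apply, mul_comm]


lemma aux_condexp_lintegral {Ω : Type*} [mF : MeasurableSpace Ω]
    (P : Measure Ω) [IsProbabilityMeasure P] (mH : MeasurableSpace Ω) (hH : mH ≤ mF)
    (f : Ω → ℝ) (hf : Integrable f P) (hf0 : 0 ≤ᵐ[P] f)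
    (A : Set Ω) (hA : MeasurableSet[mH] A) :
    ∫⁻ ω in A, ENNReal.ofReal (f ω) ∂P = ∫⁻ ω in A, ENNReal.ofReal ((P[f|mH]) ω) ∂P := by
  haveI : SigmaFinite (P.trim hH) := by
    haveI : IsFiniteMeasure (P.trim hH) := isFiniteMeasure_trim hH
    infer_instance
  have hfA : Integrable f (P.restrict A) := hf.restrict
  have hcA : Integrable (P[f|mH]) (P.restrict A) := integrable_condExp.restrict
  have h1 := ofReal_integral_eq_lintegral_ofReal hfA (ae_restrict_of_ae hf0)
  have h2 := ofReal_integral_eq_lintegral_ofReal hcA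
    (ae_restrict_of_ae (condExp_nonneg hf0))
  rw [← h1, ← h2, setIntegral_condExp hH hf hA]

lemma imp_G_F {Ω X : Type*} [mF : MeasurableSpace Ω] [NormedAddCommGroup X]
    [NormedSpace ℝ X] [CompleteSpace X] [TopologicalSpace.SeparableSpace X]
    [MeasurableSpace X] [BorelSpace X]
    (P : Measure Ω) [IsProbabilityMeasure P]
    (mH : MeasurableSpace Ω) (hH : mH ≤ mF)
    (ξ : Ω → X) (hξ : Measurable[mF] ξ)
    (g : Ω → ℝ≥0∞) (hgm : Measurable[mH] g) (hgfin : ∀ᵐ ω ∂P, g ω < ⊤)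
    (hgint : ∀ A : Set Ω, MeasurableSet[mH] A →
      ∫⁻ ω in A, (‖ξ ω‖₊ : ℝ≥0∞) ∂P = ∫⁻ ω in A, g ω ∂P) :
    ∃ (γ : Ω → ℝ) (ξ' : Ω → X), Measurable[mH] γ ∧ (∀ ω, 1 ≤ γ ω) ∧
      Integrable ξ' P ∧ ξ = fun ω => γ ω • ξ' ω := by
  haveI : SecondCountableTopology X := by infer_instance
  set γ : Ω → ℝ := fun ω => max 1 (g ω).toReal with hγdef
  have hγm : Measurable[mH] γ := measurable_const.max hgm.ennreal_toReal
  have hγ1 : ∀ ω, 1 ≤ γ ω := fun ω => le_max_left _ _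
  have hγpos : ∀ ω, 0 < γ ω := fun ω => zero_lt_one.trans_le (hγ1 ω)
  set φ : Ω → ℝ≥0∞ := fun ω => (ENNReal.ofReal (γ ω))⁻¹ with hφdef
  have hφm : Measurable[mH] φ := (ENNReal.measurable_ofReal.comp hγm).inv
  refine ⟨γ, fun ω => (γ ω)⁻¹ • ξ ω, hγm, hγ1, ⟨?_, ?_⟩, ?_⟩
  · exact (((hγm.mono hH le_rfl).inv).smul hξ).aestronglyMeasurable
  · have key : ∀ ω, (‖(γ ω)⁻¹ • ξ ω‖₊ : ℝ≥0∞) = φ ω * (‖ξ ω‖₊ : ℝ≥0∞) := by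
      intro ω
      rw [nnnorm_smul, ENNReal.coe_mul]
      congr 1
      show (‖(γ ω)⁻¹‖₊ : ℝ≥0∞) = (ENNReal.ofReal (γ ω))⁻¹
      rw [← ENNReal.ofReal_inv_of_pos (hγpos ω), ← Real.enorm_eq_ofReal
        (inv_nonneg.mpr (hγpos ω).le), enorm_eq_nnnorm]
    have h1 : ∫⁻ ω, (‖(γ ω)⁻¹ • ξ ω‖₊ : ℝ≥0∞) ∂P = ∫⁻ ω, φ ω * (‖ξ ω‖₊ : ℝ≥0∞) ∂P := by
      simp only [key]
    have hnn : Measurable[mF] (fun ω => (‖ξ ω‖₊ : ℝ≥0∞)) := measurable_enorm.comp hξ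
    have h2 : ∫⁻ ω, φ ω * (‖ξ ω‖₊ : ℝ≥0∞) ∂P = ∫⁻ ω, φ ω * g ω ∂P :=
      by
      have hgm' : Measurable[mF] g := hgm.mono hH le_rfl
      exact @aux_lintegral_mul Ω mF P mH hH _ g hnn hgm' hgint φ hφm
    have h3 : ∫⁻ ω, φ ω * g ω ∂P ≤ 1 := by
      have hb : ∀ᵐ ω ∂P, φ ω * g ω ≤ 1 := by
        filter_upwards [hgfin] with ω hω
        have hle : g ω ≤ ENNReal.ofReal (γ ω) := by
          rw [← ENNReal.ofReal_toReal hω.ne]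
          exact ENNReal.ofReal_le_ofReal (le_max_right _ _)
        calc φ ω * g ω ≤ φ ω * ENNReal.ofReal (γ ω) := mul_le_mul_right hle _
          _ = 1 := ENNReal.inv_mul_cancel
            (by simpa using ENNReal.ofReal_pos.mpr (hγpos ω) |>.ne')
            ENNReal.ofReal_ne_top
      calc ∫⁻ ω, φ ω * g ω ∂P ≤ ∫⁻ _, 1 ∂P := lintegral_mono_ae hb
        _ = 1 := by simp
    show (∫⁻ ω, (‖(γ ω)⁻¹ • ξ ω‖₊ : ℝ≥0∞) ∂P) < ⊤
    rw [h1, h2]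
    exact lt_of_le_of_lt h3 ENNReal.one_lt_top
  · funext ω
    rw [smul_inv_smul₀ (hγpos ω).ne']

lemma imp_F_G {Ω X : Type*} [mF : MeasurableSpace Ω] [NormedAddCommGroup X]
    [NormedSpace ℝ X] [CompleteSpace X] [TopologicalSpace.SeparableSpace X]
    [MeasurableSpace X] [BorelSpace X]
    (P : Measure Ω) [IsProbabilityMeasure P]
    (mH : MeasurableSpace Ω) (hH : mH ≤ mF)
    (ξ : Ω → X) (hξ : Measurable[mF] ξ)
    (γ : Ω → ℝ) (ξ' : Ω → X) (hγm : Measurable[mH] γ) (hγ1 : ∀ ω, 1 ≤ γ ω)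
    (hξ'int : Integrable ξ' P) (hfac : ξ = fun ω => γ ω • ξ' ω) :
    ∃ g : Ω → ℝ≥0∞, Measurable[mH] g ∧ (∀ᵐ ω ∂P, g ω < ⊤) ∧
      ∀ A : Set Ω, MeasurableSet[mH] A →
        ∫⁻ ω in A, (‖ξ ω‖₊ : ℝ≥0∞) ∂P = ∫⁻ ω in A, g ω ∂P := by
  haveI : SecondCountableTopology X := by infer_instance
  have hγpos : ∀ ω, 0 < γ ω := fun ω => zero_lt_one.trans_le (hγ1 ω)
  have hξ'm : Measurable[mF] ξ' := by
    have : ξ' = fun ω => (γ ω)⁻¹ • ξ ω := by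
      funext ω
      rw [hfac]
      exact (inv_smul_smul₀ (hγpos ω).ne' _).symm
    rw [this]
    exact ((hγm.mono hH le_rfl).inv).smul hξ
  set h : Ω → ℝ := P[fun ω => ‖ξ' ω‖|mH] with hdef
  have hhm : Measurable[mH] h := stronglyMeasurable_condExp.measurable
  refine ⟨fun ω => ENNReal.ofReal (γ ω) * ENNReal.ofReal (h ω), ?_, ?_, ?_⟩
  · exact (ENNReal.measurable_ofReal.comp hγm).mul (ENNReal.measurable_ofReal.comp hhm)
  · exact Filter.Eventually.of_forall fun ω =>
      ENNReal.mul_lt_top ENNReal.ofReal_lt_top ENNReal.ofReal_lt_top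
  · intro A hA
    have hset : ∀ B : Set Ω, MeasurableSet[mH] B →
        ∫⁻ ω in B, (‖ξ' ω‖₊ : ℝ≥0∞) ∂P = ∫⁻ ω in B, ENNReal.ofReal (h ω) ∂P := by
      intro B hB
      have := @aux_condexp_lintegral Ω mF P _ mH hH (fun ω => ‖ξ' ω‖) hξ'int.norm
        (Filter.Eventually.of_forall fun ω => norm_nonneg _) B hB
      simpa only [ofReal_norm, enorm_eq_nnnorm] using this
    set φ : Ω → ℝ≥0∞ := A.indicator (fun ω => ENNReal.ofReal (γ ω)) with hφdef
    have hφm : Measurable[mH] φ := (ENNReal.measurable_ofReal.comp hγm).indicator hA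
    have key := @aux_lintegral_mul Ω mF P mH hH (fun ω => (‖ξ' ω‖₊ : ℝ≥0∞))
      (fun ω => ENNReal.ofReal (h ω)) (measurable_enorm.comp hξ'm)
      ((ENNReal.measurable_ofReal.comp hhm).mono hH le_rfl) hset φ hφm
    calc ∫⁻ ω in A, (‖ξ ω‖₊ : ℝ≥0∞) ∂P
        = ∫⁻ ω, A.indicator (fun ω => (‖ξ ω‖₊ : ℝ≥0∞)) ω ∂P :=
          (lintegral_indicator (hH A hA) _).symm
      _ = ∫⁻ ω, φ ω * (‖ξ' ω‖₊ : ℝ≥0∞) ∂P := by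
          congr 1
          funext ω
          by_cases hω : ω ∈ A
          · simp only [Set.indicator_of_mem hω, hφdef]
            rw [hfac]
            simp only []
            rw [nnnorm_smul, ENNReal.coe_mul,
              ← Real.enorm_eq_ofReal (hγpos ω).le, enorm_eq_nnnorm]
          · simp [Set.indicator_of_notMem hω, hφdef]
      _ = ∫⁻ ω, φ ω * ENNReal.ofReal (h ω) ∂P := key
      _ = ∫⁻ ω, A.indicator (fun ω => ENNReal.ofReal (γ ω) * ENNReal.ofReal (h ω)) ω ∂P := by
          congr 1
          funext ω
          by_cases hω : ω ∈ A
          · simp [Set.indicator_of_mem hω, hφdef]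
          · simp [Set.indicator_of_notMem hω, hφdef]
      _ = ∫⁻ ω in A, ENNReal.ofReal (γ ω) * ENNReal.ofReal (h ω) ∂P :=
          lintegral_indicator (hH A hA) _

lemma imp_G_P {Ω X : Type*} [mF : MeasurableSpace Ω] [NormedAddCommGroup X]
    [NormedSpace ℝ X] [CompleteSpace X] [TopologicalSpace.SeparableSpace X]
    [MeasurableSpace X] [BorelSpace X]
    (P : Measure Ω) [IsProbabilityMeasure P]
    (mH : MeasurableSpace Ω) (hH : mH ≤ mF)
    (ξ : Ω → X) (hξ : Measurable[mF] ξ)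
    (g : Ω → ℝ≥0∞) (hgm : Measurable[mH] g) (hgfin : ∀ᵐ ω ∂P, g ω < ⊤)
    (hgint : ∀ A : Set Ω, MeasurableSet[mH] A →
      ∫⁻ ω in A, (‖ξ ω‖₊ : ℝ≥0∞) ∂P = ∫⁻ ω in A, g ω ∂P) :
    ∃ A : ℕ → Set Ω, (∀ i, MeasurableSet[mH] (A i)) ∧
      Pairwise (Function.onFun Disjoint A) ∧ (⋃ i, A i) = Set.univ ∧
      ∀ i, Integrable ((A i).indicator ξ) P := by
  haveI : SecondCountableTopology X := by infer_instance
  set n : Ω → ℕ := fun ω => ⌊(g ω).toReal⌋₊ with hndef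
  have hnm : Measurable[mH] n := Nat.measurable_floor.comp hgm.ennreal_toReal
  refine ⟨fun i => n ⁻¹' {i}, fun i => hnm (measurableSet_singleton i), ?_, ?_, ?_⟩
  · intro i j hij
    rw [Function.onFun, Set.disjoint_left]
    rintro ω (h1 : n ω = i) (h2 : n ω = j)
    exact hij (h1 ▸ h2 ▸ rfl)
  · refine Set.eq_univ_iff_forall.mpr fun ω => Set.mem_iUnion.mpr ⟨n ω, rfl⟩
  · intro i
    constructor
    · exact (hξ.indicator (hH _ (hnm (measurableSet_singleton i)))).aestronglyMeasurable
    · show (∫⁻ ω, (‖(n ⁻¹' {i}).indicator ξ ω‖₊ : ℝ≥0∞) ∂P) < ⊤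
      have hAi : MeasurableSet[mF] (n ⁻¹' {i}) := hH _ (hnm (measurableSet_singleton i))
      have heq : (fun ω => (‖(n ⁻¹' {i}).indicator ξ ω‖₊ : ℝ≥0∞)) =
          (n ⁻¹' {i}).indicator (fun ω => (‖ξ ω‖₊ : ℝ≥0∞)) := by
        funext ω
        by_cases hω : ω ∈ n ⁻¹' {i}
        · simp [Set.indicator_of_mem hω]
        · simp [Set.indicator_of_notMem hω]
      rw [heq, lintegral_indicator hAi, hgint _ (hnm (measurableSet_singleton i))]
      have hb : ∫⁻ ω in n ⁻¹' {i}, g ω ∂P ≤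
          ∫⁻ _ in n ⁻¹' {i}, ENNReal.ofReal ((i : ℝ) + 1) ∂P := by
        refine setLIntegral_mono_ae' hAi ?_
        filter_upwards [hgfin] with ω hω hmem
        have h1 : (g ω).toReal < (i : ℝ) + 1 := by
          have := Nat.lt_floor_add_one ((g ω).toReal)
          have hmem' : n ω = i := hmem
          rw [hndef] at hmem'
          simpa [hmem'] using this
        calc g ω = ENNReal.ofReal ((g ω).toReal) := (ENNReal.ofReal_toReal hω.ne).symm
          _ ≤ ENNReal.ofReal ((i : ℝ) + 1) := ENNReal.ofReal_le_ofReal h1.le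
      refine lt_of_le_of_lt hb ?_
      rw [setLIntegral_const]
      exact ENNReal.mul_lt_top ENNReal.ofReal_lt_top
        (lt_of_le_of_lt (measure_mono (Set.subset_univ _)) (by simp))

lemma imp_P_G {Ω X : Type*} [mF : MeasurableSpace Ω] [NormedAddCommGroup X]
    [NormedSpace ℝ X] [CompleteSpace X] [TopologicalSpace.SeparableSpace X]
    [MeasurableSpace X] [BorelSpace X]
    (P : Measure Ω) [IsProbabilityMeasure P]
    (mH : MeasurableSpace Ω) (hH : mH ≤ mF)
    (ξ : Ω → X) (hξ : Measurable[mF] ξ)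
    (A : ℕ → Set Ω) (hAm : ∀ i, MeasurableSet[mH] (A i))
    (hdis : Pairwise (Function.onFun Disjoint A)) (hun : (⋃ i, A i) = Set.univ)
    (hint : ∀ i, Integrable ((A i).indicator ξ) P) :
    ∃ g : Ω → ℝ≥0∞, Measurable[mH] g ∧ (∀ᵐ ω ∂P, g ω < ⊤) ∧
      ∀ B : Set Ω, MeasurableSet[mH] B →
        ∫⁻ ω in B, (‖ξ ω‖₊ : ℝ≥0∞) ∂P = ∫⁻ ω in B, g ω ∂P := by
  have hmem : ∀ ω, ∃ i, ω ∈ A i := fun ω =>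
    Set.mem_iUnion.mp (hun ▸ Set.mem_univ ω)
  set f : ℕ → Ω → ℝ := fun i ω => ‖(A i).indicator ξ ω‖ with hfdef
  have hfint : ∀ i, Integrable (f i) P := fun i => (hint i).norm
  set h : ℕ → Ω → ℝ := fun i => P[f i|mH] with hhdef
  have hhm : ∀ i, Measurable[mH] (h i) := fun i => stronglyMeasurable_condExp.measurable
  set g : Ω → ℝ≥0∞ :=
    fun ω => ∑' i, (A i).indicator (fun ω => ENNReal.ofReal (h i ω)) ω with hgdef
  have hterm : ∀ i, Measurable[mH] ((A i).indicator (fun ω => ENNReal.ofReal (h i ω))) :=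
    fun i => (ENNReal.measurable_ofReal.comp (hhm i)).indicator (hAm i)
  refine ⟨g, Measurable.ennreal_tsum hterm, ?_, ?_⟩
  · refine Filter.Eventually.of_forall fun ω => ?_
    obtain ⟨i₀, hi₀⟩ := hmem ω
    have : g ω = ENNReal.ofReal (h i₀ ω) :=
      (tsum_eq_single i₀ fun j hj => Set.indicator_of_notMem
          (fun h' => Set.disjoint_left.mp (hdis hj) h' hi₀) _).trans
        (Set.indicator_of_mem hi₀ _)
    rw [this]
    exact ENNReal.ofReal_lt_top
  · intro B hB
    have hAmF : ∀ i, MeasurableSet[mF] (A i) := fun i => hH _ (hAm i)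
    have hnorm_eq : (fun ω => (‖ξ ω‖₊ : ℝ≥0∞)) =
        fun ω => ∑' i, (A i).indicator (fun ω => (‖ξ ω‖₊ : ℝ≥0∞)) ω := by
      funext ω
      obtain ⟨i₀, hi₀⟩ := hmem ω
      rw [tsum_eq_single i₀ (fun j hj => ?_)]
      · exact (Set.indicator_of_mem hi₀ (fun ω => ((‖ξ ω‖₊ : ℝ≥0∞)))).symm
      · exact Set.indicator_of_notMem (fun h' => Set.disjoint_left.mp (hdis hj) h' hi₀) _
    have hpiece : ∀ i, ∫⁻ ω in B, (A i).indicator (fun ω => (‖ξ ω‖₊ : ℝ≥0∞)) ω ∂P =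
        ∫⁻ ω in B, (A i).indicator (fun ω => ENNReal.ofReal (h i ω)) ω ∂P := by
      intro i
      have hiB : MeasurableSet[mF] (A i ∩ B) := (hAmF i).inter (hH _ hB)
      rw [lintegral_indicator (hAmF i), lintegral_indicator (hAmF i),
        Measure.restrict_restrict (hAmF i)]
      have e1 : ∫⁻ ω in A i ∩ B, (‖ξ ω‖₊ : ℝ≥0∞) ∂P =
          ∫⁻ ω in A i ∩ B, ENNReal.ofReal (f i ω) ∂P := by
        refine setLIntegral_congr_fun hiB (fun ω hω => ?_)
        rw [hfdef]
        simp only [Set.indicator_of_mem hω.1, ofReal_norm, enorm_eq_nnnorm]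
      have e2 := @aux_condexp_lintegral Ω mF P _ mH hH (f i) (hfint i)
        (Filter.Eventually.of_forall fun ω => norm_nonneg _) (A i ∩ B)
        ((hAm i).inter hB)
      rw [e1, e2]
    calc ∫⁻ ω in B, (‖ξ ω‖₊ : ℝ≥0∞) ∂P
        = ∫⁻ ω in B, ∑' i, (A i).indicator (fun ω => (‖ξ ω‖₊ : ℝ≥0∞)) ω ∂P := by
          rw [← hnorm_eq]
      _ = ∑' i, ∫⁻ ω in B, (A i).indicator (fun ω => (‖ξ ω‖₊ : ℝ≥0∞)) ω ∂P :=
          lintegral_tsum fun i =>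
            ((measurable_enorm.comp hξ).indicator (hAmF i)).aemeasurable
      _ = ∑' i, ∫⁻ ω in B, (A i).indicator (fun ω => ENNReal.ofReal (h i ω)) ω ∂P :=
          tsum_congr hpiece
      _ = ∫⁻ ω in B, ∑' i, (A i).indicator (fun ω => ENNReal.ofReal (h i ω)) ω ∂P :=
          (lintegral_tsum fun i =>
            ((hterm i).mono hH le_rfl).aemeasurable).symm
      _ = ∫⁻ ω in B, g ω ∂P := rfl

/-- Theorem B.2 and Lemma B.3: ξ satisfies E(‖ξ‖|H) < ∞ a.s. iff ξ = γ ξ̃ with γ an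
H-measurable random variable with values in [1,∞) and ξ̃ Bochner integrable; equivalently,
there is a countable H-measurable partition {A_i} of Ω with ξ 1_{A_i} integrable for all i. -/
theorem stmt19 {Ω X : Type*} (mH : MeasurableSpace Ω) [mF : MeasurableSpace Ω] [NormedAddCommGroup X]
    [NormedSpace ℝ X] [CompleteSpace X] [TopologicalSpace.SeparableSpace X]
    [MeasurableSpace X] [BorelSpace X]
    (P : Measure Ω) [IsProbabilityMeasure P]
    (hH : mH ≤ mF)
    (ξ : Ω → X) (hξ : Measurable ξ) :
    ((∃ g : Ω → ℝ≥0∞, Measurable[mH] g ∧ (∀ᵐ ω ∂P, g ω < ⊤) ∧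
        ∀ A : Set Ω, MeasurableSet[mH] A →
          ∫⁻ ω in A, (‖ξ ω‖₊ : ℝ≥0∞) ∂P = ∫⁻ ω in A, g ω ∂P) ↔
      (∃ (γ : Ω → ℝ) (ξ' : Ω → X), Measurable[mH] γ ∧ (∀ ω, 1 ≤ γ ω) ∧
        Integrable ξ' P ∧ ξ = fun ω => γ ω • ξ' ω)) ∧
    ((∃ g : Ω → ℝ≥0∞, Measurable[mH] g ∧ (∀ᵐ ω ∂P, g ω < ⊤) ∧
        ∀ A : Set Ω, MeasurableSet[mH] A →
          ∫⁻ ω in A, (‖ξ ω‖₊ : ℝ≥0∞) ∂P = ∫⁻ ω in A, g ω ∂P) ↔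
      (∃ A : ℕ → Set Ω, (∀ i, MeasurableSet[mH] (A i)) ∧
        Pairwise (Function.onFun Disjoint A) ∧ (⋃ i, A i) = Set.univ ∧
        ∀ i, Integrable ((A i).indicator ξ) P)) := by
  constructor
  · constructor
    · rintro ⟨g, hgm, hgfin, hgint⟩
      exact @imp_G_F Ω X mF _ _ _ _ _ _ P _ mH hH ξ hξ g hgm hgfin hgint
    · rintro ⟨γ, ξ', hγm, hγ1, hint, hfac⟩
      exact @imp_F_G Ω X mF _ _ _ _ _ _ P _ mH hH ξ hξ γ ξ' hγm hγ1 hint hfac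
  · constructor
    · rintro ⟨g, hgm, hgfin, hgint⟩
      exact @imp_G_P Ω X mF _ _ _ _ _ _ P _ mH hH ξ hξ g hgm hgfin hgint
    · rintro ⟨A, hAm, hdis, hun, hint⟩
      exact @imp_P_G Ω X mF _ _ _ _ _ _ P _ mH hH ξ hξ A hAm hdis hun hint
end
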